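/- arXiv:math/0410422 — 8 statements merged into one kernel-verified Lean document; each statement's English description precedes it below -/
import Mathlib

section
/- Every stationary reversible finite Markov chain {Z_t} and every map f from the state space to ℝ satisfy E[(f(Z_t) - f(Z_0))²] ≤ t · E[(f(Z_1) - f(Z_0))²] for all t ≥ 1; i.e., the real line has Markov type 2 with constant 1. -/
/-!
Let `T` be the transition operator and `⟪u, v⟫ = ∑ i, π i * u i * v i`. Reversibility makes `T`
self-adjoint, and stationarity turns both sides into quadratic forms:
`E (f(Z_t) - f(Z_0))² = 2 ⟪f, (1 - T^t) f⟫`. The functional `p ↦ ⟪f, p(T) f⟫` on `ℝ[X]` is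
nonnegative on `q²` and on `q² (1 + X)`, the latter because `2 ⟪u, (1 + T) u⟫` is the average of
`(u(Z_0) + u(Z_1))²`. Finally `t (1 - X) - (1 - X^t) = ∑_{k<t} (1 - X)(1 - X^k)`, and each
`(1 - X)(1 - X^k)` lies in the cone generated by those polynomials, via
`(1 - X)(1 - X^(k+2)) = (1 - X)² (1 + X) + X² (1 - X)(1 - X^k)`.
-/

open Matrix Polynomial

section PolynomialFunctional

variable {R M : Type*} [CommRing R] [AddCommGroup M] [PartialOrder M] [IsOrderedAddMonoid M]
  (Q : R[X] →+ M)

theorem AddMonoidHom.map_sq_mul_one_sub_mul_one_sub_X_pow_nonneg (hsq : ∀ q, 0 ≤ Q (q ^ 2))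
    (hsq' : ∀ q, 0 ≤ Q (q ^ 2 * (1 + X))) (k : ℕ) (q : R[X]) :
    0 ≤ Q (q ^ 2 * ((1 - X) * (1 - X ^ k))) := by
  induction k using Nat.twoStepInduction generalizing q with
  | zero => rw [pow_zero, sub_self, mul_zero, mul_zero, map_zero]
  | one => rw [pow_one, ← sq, ← mul_pow]; exact hsq _
  | more k ih _ =>
    have h : q ^ 2 * ((1 - X) * (1 - X ^ (k + 2))) =
        (q * (1 - X)) ^ 2 * (1 + X) + (q * X) ^ 2 * ((1 - X) * (1 - X ^ k)) := by ring
    rw [h, map_add]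
    exact add_nonneg (hsq' _) (ih _)

theorem AddMonoidHom.map_one_sub_X_pow_le (hsq : ∀ q, 0 ≤ Q (q ^ 2))
    (hsq' : ∀ q, 0 ≤ Q (q ^ 2 * (1 + X))) (t : ℕ) :
    Q (1 - X ^ t) ≤ t • Q (1 - X) := by
  induction t with
  | zero => simp
  | succ t ih =>
    have h : (1 : R[X]) - X ^ (t + 1) = (1 - X ^ t) + (1 - X) - (1 - X) * (1 - X ^ t) := by ring
    have hnonneg := Q.map_sq_mul_one_sub_mul_one_sub_X_pow_nonneg hsq hsq' t 1
    rw [one_pow, one_mul] at hnonneg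
    rw [h, map_sub, map_add, succ_nsmul]
    exact (sub_le_self _ hnonneg).trans (add_le_add_left ih _)

end PolynomialFunctional

namespace LinearMap.IsSelfAdjoint

variable {R V : Type*} [CommRing R] [AddCommGroup V] [Module R V]
  {B : LinearMap.BilinForm R V} {T : Module.End R V}

theorem pow (hT : B.IsSelfAdjoint T) (k : ℕ) : B.IsSelfAdjoint ⇑(T ^ k) := by
  induction k with
  | zero => exact isAdjointPair_one
  | succ k ih =>
    have h := ih.mul hT
    rwa [← pow_succ, ← pow_succ'] at h

theorem aeval (hT : B.IsSelfAdjoint T) (p : R[X]) :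
    B.IsSelfAdjoint ⇑(Polynomial.aeval T p) := by
  change Polynomial.aeval T p ∈ selfAdjointSubmodule B
  rw [aeval_eq_sum_range]
  exact Submodule.sum_mem _ fun i _ => Submodule.smul_mem _ _ (hT.pow i)

theorem apply_sub_pow_apply_le [PartialOrder R] [IsOrderedRing R] (hT : B.IsSelfAdjoint T)
    (hB : ∀ x, 0 ≤ B x x) (hBT : ∀ x, 0 ≤ B x (x + T x)) (x : V) (t : ℕ) :
    B x (x - (T ^ t) x) ≤ t * B x (x - T x) := by
  let Q : R[X] →+ R :=
    { toFun p := B x (Polynomial.aeval T p x), map_zero' := by simp, map_add' := by simp }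
  have hQ : ∀ p, Q p = B x (Polynomial.aeval T p x) := fun _ => rfl
  have hsq : ∀ q, 0 ≤ Q (q ^ 2) := fun q => by
    rw [hQ, sq, map_mul, Module.End.mul_apply, ← hT.aeval]
    exact hB _
  have hsq' : ∀ q, 0 ≤ Q (q ^ 2 * (1 + X)) := fun q => by
    rw [hQ, show q ^ 2 * (1 + X) = q * ((1 + X) * q) by ring, map_mul, Module.End.mul_apply,
      ← hT.aeval]
    simpa using hBT (Polynomial.aeval T q x)
  simpa [hQ] using Q.map_one_sub_X_pow_le hsq hsq' t

end LinearMap.IsSelfAdjoint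

section Reversible

variable {ι : Type*} [Fintype ι] [DecidableEq ι] {π : ι → ℝ} {A P : Matrix ι ι ℝ}

theorem pow_mulVec_eq_self {v : ι → ℝ} (h : A *ᵥ v = v) (k : ℕ) : A ^ k *ᵥ v = v := by
  induction k with
  | zero => rw [pow_zero, one_mulVec]
  | succ k ih => rw [pow_succ, ← mulVec_mulVec, h, ih]

theorem vecMul_pow_eq_self {v : ι → ℝ} (h : v ᵥ* A = v) (k : ℕ) : v ᵥ* A ^ k = v := by
  induction k with
  | zero => rw [pow_zero, vecMul_one]
  | succ k ih => rw [pow_succ', ← vecMul_vecMul, h, ih]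

theorem toBilin'_diagonal_apply (π u v : ι → ℝ) :
    toBilin' (diagonal π) u v = ∑ i, π i * (u i * v i) := by
  simp only [toBilin'_apply', mulVec_diagonal, dotProduct]
  exact Finset.sum_congr rfl fun i _ => by ring

theorem toBilin'_diagonal_self_nonneg (hπ : ∀ i, 0 ≤ π i) (u : ι → ℝ) :
    0 ≤ toBilin' (diagonal π) u u := by
  rw [toBilin'_diagonal_apply]
  exact Finset.sum_nonneg fun i _ => mul_nonneg (hπ i) (mul_self_nonneg _)

theorem toBilin'_diagonal_isSelfAdjoint_toLin' (hrev : ∀ i j, π i * A i j = π j * A j i) :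
    (toBilin' (diagonal π)).IsSelfAdjoint ⇑(toLin' A) := fun u v => by
  simp only [toLin'_apply, toBilin'_diagonal_apply, mulVec, dotProduct, Finset.mul_sum,
    Finset.sum_mul]
  rw [Finset.sum_comm]
  exact Finset.sum_congr rfl fun i _ => Finset.sum_congr rfl fun j _ => by
    linear_combination (u i * v j) * hrev j i

theorem sum_sum_mul_sq_add (hP : P *ᵥ 1 = 1) (hπP : π ᵥ* P = π) (a b : ℝ) (u : ι → ℝ) :
    ∑ i, ∑ j, π i * P i j * (a * u i + b * u j) ^ 2 =
      (a ^ 2 + b ^ 2) * toBilin' (diagonal π) u u +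
        2 * a * b * toBilin' (diagonal π) u (P *ᵥ u) := by
  have hrow : ∀ i, ∑ j, P i j = 1 := fun i => by
    simpa [mulVec, dotProduct] using congrFun hP i
  have hcol : ∀ j, ∑ i, π i * P i j = π j := fun j => by
    simpa [vecMul, dotProduct] using congrFun hπP j
  have hleft : ∑ i, ∑ j, π i * P i j * u i ^ 2 = toBilin' (diagonal π) u u := by
    simp only [toBilin'_diagonal_apply, ← Finset.sum_mul, ← Finset.mul_sum, hrow]
    exact Finset.sum_congr rfl fun i _ => by ring
  have hright : ∑ i, ∑ j, π i * P i j * u j ^ 2 = toBilin' (diagonal π) u u := by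
    rw [Finset.sum_comm, toBilin'_diagonal_apply]
    exact Finset.sum_congr rfl fun j _ => by rw [← Finset.sum_mul, hcol]; ring
  have hcross : ∑ i, ∑ j, π i * P i j * (u i * u j) = toBilin' (diagonal π) u (P *ᵥ u) := by
    simp only [toBilin'_diagonal_apply, mulVec, dotProduct, Finset.mul_sum]
    exact Finset.sum_congr rfl fun i _ => Finset.sum_congr rfl fun j _ => by ring
  calc ∑ i, ∑ j, π i * P i j * (a * u i + b * u j) ^ 2
      = a ^ 2 * ∑ i, ∑ j, π i * P i j * u i ^ 2 + b ^ 2 * ∑ i, ∑ j, π i * P i j * u j ^ 2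
          + 2 * a * b * ∑ i, ∑ j, π i * P i j * (u i * u j) := by
        simp only [Finset.mul_sum, ← Finset.sum_add_distrib]
        exact Finset.sum_congr rfl fun i _ => Finset.sum_congr rfl fun j _ => by ring
    _ = _ := by rw [hleft, hright, hcross]; ring

theorem sum_sum_mul_sub_sq (hP : P *ᵥ 1 = 1) (hπP : π ᵥ* P = π) (u : ι → ℝ) :
    ∑ i, ∑ j, π i * P i j * (u i - u j) ^ 2 = 2 * toBilin' (diagonal π) u (u - P *ᵥ u) := by
  calc ∑ i, ∑ j, π i * P i j * (u i - u j) ^ 2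
      = ∑ i, ∑ j, π i * P i j * (1 * u i + -1 * u j) ^ 2 := by
        simp only [one_mul, neg_one_mul, ← sub_eq_add_neg]
    _ = _ := by rw [sum_sum_mul_sq_add hP hπP, map_sub]; ring

theorem toBilin'_diagonal_add_toLin'_nonneg (hπ : ∀ i, 0 ≤ π i) (hA0 : ∀ i j, 0 ≤ A i j)
    (hA : A *ᵥ 1 = 1) (hπA : π ᵥ* A = π) (u : ι → ℝ) :
    0 ≤ toBilin' (diagonal π) u (u + toLin' A u) := by
  have hsum := sum_sum_mul_sq_add hA hπA 1 1 u
  have hnonneg : 0 ≤ ∑ i, ∑ j, π i * A i j * (1 * u i + 1 * u j) ^ 2 :=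
    Finset.sum_nonneg fun i _ => Finset.sum_nonneg fun j _ =>
      mul_nonneg (mul_nonneg (hπ i) (hA0 i j)) (sq_nonneg _)
  rw [map_add, toLin'_apply]
  linarith

end Reversible

theorem real_line_markov_type_two_general
    (n : ℕ) (π : Fin n → ℝ) (A : Matrix (Fin n) (Fin n) ℝ)
    (hπ0 : ∀ i, 0 ≤ π i)
    (hA0 : ∀ i j, 0 ≤ A i j) (hA1 : ∀ i, ∑ j, A i j = 1)
    (hstat : ∀ j, ∑ i, π i * A i j = π j)
    (hrev : ∀ i j, π i * A i j = π j * A j i)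
    (f : Fin n → ℝ) (t : ℕ) :
    ∑ i, ∑ j, π i * (A ^ t) i j * (f i - f j) ^ 2 ≤
      (t : ℝ) * ∑ i, ∑ j, π i * A i j * (f i - f j) ^ 2 := by
  have hA : A *ᵥ 1 = 1 := funext fun i => by simpa [mulVec, dotProduct] using hA1 i
  have hπA : π ᵥ* A = π := funext hstat
  rw [sum_sum_mul_sub_sq (pow_mulVec_eq_self hA t) (vecMul_pow_eq_self hπA t),
    sum_sum_mul_sub_sq hA hπA, ← toLin'_apply, ← toLin'_apply, toLin'_pow]
  have key := (toBilin'_diagonal_isSelfAdjoint_toLin' hrev).apply_sub_pow_apply_le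
    (toBilin'_diagonal_self_nonneg hπ0) (toBilin'_diagonal_add_toLin'_nonneg hπ0 hA0 hA hπA) f t
  linarith

/-- The real line has Markov type 2 with constant 1: for every stationary reversible
finite Markov chain (transition matrix `A`, stationary distribution `π`) and every
`f : {1,…,n} → ℝ`, `E (f(Z_t) - f(Z_0))² ≤ t · E (f(Z_1) - f(Z_0))²` for all `t ≥ 1`. -/
theorem real_line_markov_type_two
    (n : ℕ) (π : Fin n → ℝ) (A : Matrix (Fin n) (Fin n) ℝ)
    (hπ0 : ∀ i, 0 ≤ π i) (hπ1 : ∑ i, π i = 1)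
    (hA0 : ∀ i j, 0 ≤ A i j) (hA1 : ∀ i, ∑ j, A i j = 1)
    (hstat : ∀ j, ∑ i, π i * A i j = π j)
    (hrev : ∀ i j, π i * A i j = π j * A j i)
    (f : Fin n → ℝ) (t : ℕ) (ht : 1 ≤ t) :
    ∑ i, ∑ j, π i * (A ^ t) i j * (f i - f j) ^ 2 ≤
      (t : ℝ) * ∑ i, ∑ j, π i * A i j * (f i - f j) ^ 2 :=
  real_line_markov_type_two_general n π A hπ0 hA0 hA1 hstat hrev f t
end

section
/- Fix 1 < q ≤ 2 and let X be a normed space whose q-smoothness constant S_q(X) is finite (i.e., ‖x+y‖^q + ‖x-y‖^q ≤ 2‖x‖^q + 2 S_q(X)^q ‖y‖^q for all x, y ∈ X). Then for every X-valued integrable random variable Z, E‖Z‖^q ≤ ‖E Z‖^q + (S_q(X)^q / (2^{q-1} - 1)) · E‖Z - E Z‖^q. -/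
open MeasureTheory Filter Topology

/-- For `1 < q ≤ 2` and a normed space `X` with `q`-smoothness constant `S`
(i.e. `‖x+y‖^q + ‖x-y‖^q ≤ 2‖x‖^q + 2 S^q ‖y‖^q` for all `x y`), every Bochner
integrable `X`-valued random variable `Z` with `E‖Z‖^q < ∞` satisfies
`E‖Z‖^q ≤ ‖E Z‖^q + (S^q/(2^{q-1}-1)) E‖Z - E Z‖^q`. -/
theorem smooth_variance_inequality
    {Ω X : Type*} [MeasurableSpace Ω] (μ : Measure Ω) [IsProbabilityMeasure μ]
    [NormedAddCommGroup X] [NormedSpace ℝ X] [CompleteSpace X]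
    (q : ℝ) (hq1 : 1 < q) (hq2 : q ≤ 2)
    (S : ℝ) (hS0 : 0 ≤ S)
    (hS : ∀ x y : X, ‖x + y‖ ^ q + ‖x - y‖ ^ q ≤ 2 * ‖x‖ ^ q + 2 * S ^ q * ‖y‖ ^ q)
    (Z : Ω → X) (hZ : Integrable Z μ)
    (hZq : Integrable (fun ω => ‖Z ω‖ ^ q) μ) :
    ∫ ω, ‖Z ω‖ ^ q ∂μ ≤
      ‖∫ ω, Z ω ∂μ‖ ^ q +
        S ^ q / (2 ^ (q - 1) - 1) * ∫ ω, ‖Z ω - ∫ ω', Z ω' ∂μ‖ ^ q ∂μ := by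
  have hq0 : (0:ℝ) < q := lt_trans one_pos hq1
  set m := ∫ ω, Z ω ∂μ with hm
  set W : Ω → X := fun ω => Z ω - m with hWdef
  have hW : Integrable W μ := hZ.sub (integrable_const m)
  have hW0 : ∫ ω, W ω ∂μ = 0 := by
    rw [hWdef]
    rw [integral_sub hZ (integrable_const m), integral_const]
    simp [hm]
  -- elementary rpow bound
  have key2 : ∀ a b : ℝ, 0 ≤ a → 0 ≤ b → (a + b) ^ q ≤ 2 ^ q * (a ^ q + b ^ q) := by
    intro a b ha hb
    have h1 : a + b ≤ 2 * max a b := by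
      rcases le_total a b with h | h
      · rw [max_eq_right h]; linarith
      · rw [max_eq_left h]; linarith
    calc (a+b)^q ≤ (2 * max a b)^q :=
          Real.rpow_le_rpow (by linarith) h1 hq0.le
      _ = 2^q * (max a b)^q := Real.mul_rpow (by norm_num) (le_max_of_le_left ha)
      _ ≤ 2^q * (a^q + b^q) := by
          have : (max a b)^q ≤ a^q + b^q := by
            rcases le_total a b with h | h
            · rw [max_eq_right h]; exact le_add_of_nonneg_left (Real.rpow_nonneg ha q)
            · rw [max_eq_left h]; exact le_add_of_nonneg_right (Real.rpow_nonneg hb q)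
          have h2 : (0:ℝ) ≤ 2^q := Real.rpow_nonneg (by norm_num) q
          nlinarith
  have hWq : Integrable (fun ω => ‖W ω‖ ^ q) μ := by
    refine Integrable.mono' (((hZq.add (integrable_const (‖m‖^q))).const_mul (2^q)))
      ((Real.continuous_rpow_const hq0.le).comp_aestronglyMeasurable
        hW.aestronglyMeasurable.norm) ?_
    filter_upwards with ω
    rw [Real.norm_of_nonneg (Real.rpow_nonneg (norm_nonneg _) q)]
    calc ‖W ω‖ ^ q ≤ (‖Z ω‖ + ‖m‖) ^ q := by
          apply Real.rpow_le_rpow (norm_nonneg _) (norm_sub_le _ _) hq0.le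
      _ ≤ 2^q * (‖Z ω‖^q + ‖m‖^q) := key2 _ _ (norm_nonneg _) (norm_nonneg _)
  have hIntc : ∀ c : ℝ, Integrable (fun ω => m + c • W ω) μ :=
    fun c => (integrable_const m).add (hW.smul c)
  have hInt : ∀ c : ℝ, Integrable (fun ω => ‖m + c • W ω‖ ^ q) μ := by
    intro c
    refine Integrable.mono' (((integrable_const (‖m‖^q)).add (hWq.const_mul (|c|^q))).const_mul (2^q))
      ((Real.continuous_rpow_const hq0.le).comp_aestronglyMeasurable
        (hIntc c).aestronglyMeasurable.norm) ?_
    filter_upwards with ω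
    rw [Real.norm_of_nonneg (Real.rpow_nonneg (norm_nonneg _) q)]
    calc ‖m + c • W ω‖ ^ q ≤ (‖m‖ + |c| * ‖W ω‖) ^ q := by
          apply Real.rpow_le_rpow (norm_nonneg _) _ hq0.le
          calc ‖m + c • W ω‖ ≤ ‖m‖ + ‖c • W ω‖ := norm_add_le _ _
            _ = ‖m‖ + |c| * ‖W ω‖ := by rw [norm_smul, Real.norm_eq_abs]
      _ ≤ 2^q * (‖m‖^q + (|c| * ‖W ω‖)^q) := key2 _ _ (norm_nonneg _)
          (mul_nonneg (abs_nonneg _) (norm_nonneg _))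
      _ = 2^q * (‖m‖^q + |c|^q * ‖W ω‖^q) := by
          rw [Real.mul_rpow (abs_nonneg _) (norm_nonneg _)]
  set a : ℝ → ℝ := fun c => ∫ ω, ‖m + c • W ω‖ ^ q ∂μ with ha
  set B : ℝ := ∫ ω, ‖W ω‖ ^ q ∂μ with hB
  have hB0 : 0 ≤ B := integral_nonneg fun ω => Real.rpow_nonneg (norm_nonneg _) q
  -- Jensen
  have hJ : ∀ c : ℝ, ‖m‖ ^ q ≤ a c := by
    intro c
    have hmean : ∫ ω, (m + c • W ω) ∂μ = m := by
      rw [integral_add (f := fun _ => m) (g := fun ω => c • W ω) (integrable_const m) (hW.smul c)]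
      rw [integral_smul, hW0, smul_zero, add_zero, integral_const]
      simp
    have h1 : ‖m‖ ≤ ∫ ω, ‖m + c • W ω‖ ∂μ := by
      conv_lhs => rw [← hmean]
      exact norm_integral_le_integral_norm _
    have h2 : ‖m‖ ^ q ≤ (∫ ω, ‖m + c • W ω‖ ∂μ) ^ q :=
      Real.rpow_le_rpow (norm_nonneg _) h1 hq0.le
    refine h2.trans ?_
    have hJensen := (convexOn_rpow hq1.le).map_average_le
      ((Real.continuous_rpow_const hq0.le).continuousOn) isClosed_Ici
      (Filter.Eventually.of_forall fun ω => (norm_nonneg (m + c • W ω) : ‖m + c • W ω‖ ∈ Set.Ici (0:ℝ)))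
      (hIntc c).norm ?_
    · rwa [average_eq_integral, average_eq_integral] at hJensen
    · exact (hInt c)
  -- recursion step
  have hrec : ∀ c : ℝ, 0 ≤ c → a c + ‖m‖^q ≤ 2 * a (c/2) + 2*S^q*((c/2)^q*B) := by
    intro c hc
    have hpt : ∀ ω, ‖m + c • W ω‖^q + ‖m‖^q
        ≤ 2 * ‖m + (c/2) • W ω‖^q + 2*S^q*((c/2)^q*‖W ω‖^q) := by
      intro ω
      have h := hS (m + (c/2) • W ω) ((c/2) • W ω)
      have e1 : m + (c/2) • W ω + (c/2) • W ω = m + c • W ω := by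
        rw [add_assoc, ← add_smul]; norm_num
      have e2 : m + (c/2) • W ω - (c/2) • W ω = m := add_sub_cancel_right _ _
      have hns : ‖(c/2) • W ω‖^q = (c/2)^q * ‖W ω‖^q := by
        rw [norm_smul, Real.norm_eq_abs, abs_of_nonneg (by linarith),
          Real.mul_rpow (by linarith) (norm_nonneg _)]
      rw [e1, e2, hns] at h
      linarith
    have hint := integral_mono
      (f := fun ω => ‖m + c • W ω‖^q + ‖m‖^q)
      (g := fun ω => 2 * ‖m + (c/2) • W ω‖^q + 2*S^q*((c/2)^q*‖W ω‖^q))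
      ((hInt c).add (integrable_const _))
      (((hInt (c/2)).const_mul 2).add (((hWq.const_mul ((c/2)^q)).const_mul (2*S^q)))) hpt
    rw [integral_add (hInt c) (integrable_const _),
      integral_add ((hInt (c/2)).const_mul 2) ((hWq.const_mul ((c/2)^q)).const_mul (2*S^q)),
      integral_const, integral_const_mul _ _, integral_const_mul _ _, integral_const_mul _ _] at hint
    simpa [measure_univ] using hint
  -- small-scale bound
  have hsmall : ∀ c : ℝ, 0 ≤ c → a c ≤ ‖m‖^q + 2*S^q*(c^q*B) := by
    intro c hc
    have hpt : ∀ ω, ‖m + c • W ω‖^q + ‖m + (-c) • W ω‖^q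
        ≤ 2*‖m‖^q + 2*S^q*(c^q*‖W ω‖^q) := by
      intro ω
      have h := hS m (c • W ω)
      have e2 : m - c • W ω = m + (-c) • W ω := by rw [neg_smul, ← sub_eq_add_neg]
      have hns : ‖c • W ω‖^q = c^q * ‖W ω‖^q := by
        rw [norm_smul, Real.norm_eq_abs, abs_of_nonneg hc, Real.mul_rpow hc (norm_nonneg _)]
      rw [e2, hns] at h
      linarith
    have hint := integral_mono
      (f := fun ω => ‖m + c • W ω‖^q + ‖m + (-c) • W ω‖^q)
      (g := fun ω => 2*‖m‖^q + 2*S^q*(c^q*‖W ω‖^q))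
      ((hInt c).add (hInt (-c)))
      ((integrable_const _).add ((hWq.const_mul (c^q)).const_mul (2*S^q))) hpt
    rw [integral_add (hInt c) (hInt (-c)),
      integral_add (integrable_const _) ((hWq.const_mul (c^q)).const_mul (2*S^q)),
      integral_const, integral_const_mul _ _, integral_const_mul _ _] at hint
    simp only [measure_univ, probReal_univ, ENNReal.toReal_one, one_smul] at hint
    have hJc := hJ (-c)
    linarith
  -- geometric setup
  set r : ℝ := (2:ℝ)^(1-q) with hr
  have hr0 : 0 < r := Real.rpow_pos_of_pos two_pos _
  have hr1 : r < 1 := Real.rpow_lt_one_of_one_lt_of_neg one_lt_two (by linarith)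
  have hkey : ∀ n : ℕ, (2:ℝ)^n * ((1/2:ℝ)^n)^q = r^n := by
    intro n
    have h2 : ((1/2:ℝ)^n : ℝ) = (2:ℝ)^(-(n:ℝ)) := by
      rw [Real.rpow_neg (by norm_num), Real.rpow_natCast]
      simp [one_div, inv_pow]
    rw [h2, ← Real.rpow_natCast 2 n, ← Real.rpow_natCast r n, hr,
      ← Real.rpow_mul (by norm_num : (0:ℝ) ≤ 2), ← Real.rpow_mul (by norm_num : (0:ℝ) ≤ 2),
      ← Real.rpow_add two_pos]
    congr 1; ring
  have hiter : ∀ n : ℕ, a 1 - ‖m‖^q ≤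
      2^n * (a ((1/2:ℝ)^n) - ‖m‖^q) + S^q * B * ∑ j ∈ Finset.range n, r^(j+1) := by
    intro n
    induction n with
    | zero => simp
    | succ n ih =>
      have h1 := hrec ((1/2:ℝ)^n) (by positivity)
      have e : ((1/2:ℝ)^n)/2 = (1/2:ℝ)^(n+1) := by rw [pow_succ]; ring
      rw [e] at h1
      have h2 : (2:ℝ)^n * (a ((1/2:ℝ)^n) - ‖m‖^q)
          ≤ (2:ℝ)^n * (2*(a ((1/2:ℝ)^(n+1)) - ‖m‖^q) + 2*S^q*(((1/2:ℝ)^(n+1))^q * B)) := by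
        apply mul_le_mul_of_nonneg_left _ (by positivity)
        linarith
      have h3 : (2:ℝ)^n * (2*(a ((1/2:ℝ)^(n+1)) - ‖m‖^q) + 2*S^q*(((1/2:ℝ)^(n+1))^q * B))
          = 2^(n+1) * (a ((1/2:ℝ)^(n+1)) - ‖m‖^q) + S^q * B * r^(n+1) := by
        linear_combination (S^q*B) * hkey (n+1)
      rw [Finset.sum_range_succ]
      calc a 1 - ‖m‖^q
          ≤ 2^n * (a ((1/2:ℝ)^n) - ‖m‖^q) + S^q * B * ∑ j ∈ Finset.range n, r^(j+1) := ih
        _ ≤ 2^(n+1) * (a ((1/2:ℝ)^(n+1)) - ‖m‖^q) + S^q * B * r^(n+1)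
            + S^q * B * ∑ j ∈ Finset.range n, r^(j+1) := by
            have := h2.trans_eq h3
            linarith
        _ = 2^(n+1) * (a ((1/2:ℝ)^(n+1)) - ‖m‖^q)
            + S^q * B * (∑ j ∈ Finset.range n, r^(j+1) + r^(n+1)) := by ring
  have hSB : 0 ≤ S^q * B := mul_nonneg (Real.rpow_nonneg hS0 q) hB0
  have hsum : ∀ n : ℕ, ∑ j ∈ Finset.range n, r^(j+1) ≤ r/(1-r) := by
    intro n
    have he : ∑ j ∈ Finset.range n, r^(j+1) = r * ∑ j ∈ Finset.range n, r^j := by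
      rw [Finset.mul_sum]
      refine Finset.sum_congr rfl fun j _ => by rw [pow_succ]; ring
    rw [he, div_eq_mul_inv]
    apply mul_le_mul_of_nonneg_left _ hr0.le
    have h := Summable.sum_le_tsum (Finset.range n) (fun i _ => by positivity)
      (summable_geometric_of_lt_one hr0.le hr1)
    rwa [tsum_geometric_of_lt_one hr0.le hr1] at h
  have hfinal : ∀ n : ℕ, a 1 - ‖m‖^q ≤ 2*S^q*B*r^n + S^q*B*(r/(1-r)) := by
    intro n
    have hs := hsmall ((1/2:ℝ)^n) (by positivity)
    have t1 : (2:ℝ)^n * (a ((1/2:ℝ)^n) - ‖m‖^q) ≤ 2*S^q*B*r^n := by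
      have h := mul_le_mul_of_nonneg_left (show a ((1/2:ℝ)^n) - ‖m‖^q ≤ 2*S^q*(((1/2:ℝ)^n)^q*B) by linarith)
        (show (0:ℝ) ≤ 2^n by positivity)
      have hk := hkey n
      nlinarith [hk]
    have t2 : S^q * B * ∑ j ∈ Finset.range n, r^(j+1) ≤ S^q*B*(r/(1-r)) :=
      mul_le_mul_of_nonneg_left (hsum n) hSB
    have := hiter n
    linarith
  have hlim : Tendsto (fun n : ℕ => 2*S^q*B*r^n + S^q*B*(r/(1-r))) atTop
      (𝓝 (2*S^q*B*0 + S^q*B*(r/(1-r)))) :=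
    ((tendsto_pow_atTop_nhds_zero_of_lt_one hr0.le hr1).const_mul _).add tendsto_const_nhds
  have hle : a 1 - ‖m‖^q ≤ S^q*B*(r/(1-r)) := by
    have h := ge_of_tendsto' hlim hfinal
    linarith
  -- conclude
  have ha1 : a 1 = ∫ ω, ‖Z ω‖^q ∂μ := by
    simp only [ha, one_smul, hWdef]
    congr 1
    ext ω
    congr 2
    abel
  have ht1 : (1:ℝ) < (2:ℝ)^(q-1) := by
    rw [show (1:ℝ) = (2:ℝ)^(0:ℝ) by simp]
    exact Real.rpow_lt_rpow_of_exponent_lt one_lt_two (by linarith)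
  have hrt : r = ((2:ℝ)^(q-1))⁻¹ := by
    rw [hr, show (1-q) = -(q-1) by ring, Real.rpow_neg (by norm_num)]
  have hdiv : r/(1-r) = 1/((2:ℝ)^(q-1)-1) := by
    rw [hrt]
    have h0 : (2:ℝ)^(q-1) ≠ 0 := by positivity
    have h1 : (2:ℝ)^(q-1) - 1 ≠ 0 := sub_ne_zero.mpr (ne_of_gt ht1)
    field_simp
  calc ∫ ω, ‖Z ω‖^q ∂μ = a 1 := ha1.symm
    _ ≤ ‖m‖^q + S^q*B*(r/(1-r)) := by linarith
    _ = ‖m‖^q + S^q/(2^(q-1)-1) * B := by rw [hdiv]; ring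
end

section
/- Fix 1 < q ≤ 2 and let X be a Banach space with finite q-smoothness constant S_q(X). Then for every X-valued martingale {M_k}_{k=0}^n with E‖M_k‖^q < ∞, E‖M_n - M_0‖^q ≤ (S_q(X)^q / (2^{q-1} - 1)) · ∑_{k=0}^{n-1} E‖M_{k+1} - M_k‖^q. -/
open MeasureTheory Filter

namespace PisierAux

lemma rpow_sub_one_mul' {q a : ℝ} (hq : 1 < q) (ha : 0 ≤ a) : a ^ (q - 1) * a = a ^ q := by
  rcases eq_or_lt_of_le ha with h | h
  · rw [← h, mul_zero, Real.zero_rpow (by positivity)]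
  · nth_rewrite 2 [← Real.rpow_one a]
    rw [← Real.rpow_add h]
    norm_num

lemma two_rpow_bound {q a b : ℝ} (hq : 0 < q) (ha : 0 ≤ a) (hb : 0 ≤ b) :
    (a + b) ^ q ≤ 2 ^ q * a ^ q + 2 ^ q * b ^ q := by
  rcases le_total a b with h | h
  · calc (a + b) ^ q ≤ (2 * b) ^ q :=
          Real.rpow_le_rpow (by linarith) (by linarith) hq.le
      _ = 2 ^ q * b ^ q := Real.mul_rpow (by norm_num) hb
      _ ≤ 2 ^ q * a ^ q + 2 ^ q * b ^ q := le_add_of_nonneg_left (by positivity)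
  · calc (a + b) ^ q ≤ (2 * a) ^ q :=
          Real.rpow_le_rpow (by linarith) (by linarith) hq.le
      _ = 2 ^ q * a ^ q := Real.mul_rpow (by norm_num) ha
      _ ≤ 2 ^ q * a ^ q + 2 ^ q * b ^ q := le_add_of_nonneg_right (by positivity)

lemma young {q a b : ℝ} (hq : 1 < q) (ha : 0 ≤ a) (hb : 0 ≤ b) :
    a ^ (q - 1) * b ≤ a ^ q + b ^ q := by
  rcases le_total a b with h | h
  · have h1 : a ^ (q - 1) ≤ b ^ (q - 1) := Real.rpow_le_rpow ha h (by linarith)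
    calc a ^ (q - 1) * b ≤ b ^ (q - 1) * b := mul_le_mul_of_nonneg_right h1 hb
      _ = b ^ q := rpow_sub_one_mul' hq hb
      _ ≤ a ^ q + b ^ q := le_add_of_nonneg_left (by positivity)
  · calc a ^ (q - 1) * b ≤ a ^ (q - 1) * a := by
          exact mul_le_mul_of_nonneg_left h (by positivity)
      _ = a ^ q := rpow_sub_one_mul' hq ha
      _ ≤ a ^ q + b ^ q := le_add_of_nonneg_right (by positivity)

lemma tangent {q a b : ℝ} (hq : 1 < q) (ha : 0 ≤ a) (hb : 0 ≤ b) :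
    a ^ q + q * a ^ (q - 1) * (b - a) ≤ b ^ q := by
  rcases eq_or_lt_of_le ha with h | h
  · rw [← h, Real.zero_rpow (ne_of_gt (by linarith)), Real.zero_rpow (by intro h'; linarith)]
    simpa using Real.rpow_nonneg hb q
  · have hs : -1 ≤ b / a - 1 := by
      have : 0 ≤ b / a := div_nonneg hb h.le
      linarith
    have hber := one_add_mul_self_le_rpow_one_add hs hq.le
    have h1 : (1 : ℝ) + (b / a - 1) = b / a := by ring
    rw [h1] at hber
    have h2 : (b / a) ^ q = b ^ q / a ^ q := Real.div_rpow hb h.le q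
    rw [h2] at hber
    have haq : (0 : ℝ) < a ^ q := Real.rpow_pos_of_pos h q
    have hmul := mul_le_mul_of_nonneg_left hber haq.le
    rw [mul_div_cancel₀ _ haq.ne'] at hmul
    have hkey : a ^ (q - 1) * a = a ^ q := rpow_sub_one_mul' hq h.le
    have hba : a ^ q * (b / a) = a ^ (q - 1) * b := by
      rw [← hkey]; field_simp
    nlinarith [hmul]

lemma two_pow_identity (q : ℝ) (N : ℕ) :
    (2 : ℝ) ^ N * (((2 : ℝ) ^ N)⁻¹) ^ q = ((2 : ℝ) ^ (1 - q)) ^ N := by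
  have h1 : ((2 : ℝ) ^ N) = (2 : ℝ) ^ (N : ℝ) := (Real.rpow_natCast 2 N).symm
  rw [← Real.rpow_natCast ((2 : ℝ) ^ (1 - q)) N, h1,
    ← Real.rpow_neg (by norm_num : (0:ℝ) ≤ 2)]
  rw [← Real.rpow_mul (by norm_num : (0:ℝ) ≤ 2), ← Real.rpow_mul (by norm_num : (0:ℝ) ≤ 2),
    ← Real.rpow_add (by norm_num : (0:ℝ) < 2)]
  congr 1
  ring

variable {Ω X : Type*} {m0 : MeasurableSpace Ω} {μ : MeasureTheory.Measure Ω}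
variable [NormedAddCommGroup X] [NormedSpace ℝ X]

lemma aesm_norm_rpow {q : ℝ} (hq : 0 < q) {f : Ω → X} (hf : AEStronglyMeasurable f μ) :
    AEStronglyMeasurable (fun ω => ‖f ω‖ ^ q) μ :=
  (Real.continuous_rpow_const hq.le).comp_aestronglyMeasurable hf.norm

lemma integrable_norm_rpow_add {q : ℝ} (hq : 0 < q) {f g : Ω → X}
    (hf : AEStronglyMeasurable f μ) (hg : AEStronglyMeasurable g μ)
    (hfq : Integrable (fun ω => ‖f ω‖ ^ q) μ) (hgq : Integrable (fun ω => ‖g ω‖ ^ q) μ) :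
    Integrable (fun ω => ‖f ω + g ω‖ ^ q) μ := by
  refine Integrable.mono' ((hfq.const_mul (2 ^ q)).add (hgq.const_mul (2 ^ q)))
    (aesm_norm_rpow hq (hf.add hg)) (Eventually.of_forall fun ω => ?_)
  rw [Real.norm_eq_abs, abs_of_nonneg (Real.rpow_nonneg (norm_nonneg _) q)]
  calc ‖f ω + g ω‖ ^ q ≤ (‖f ω‖ + ‖g ω‖) ^ q :=
        Real.rpow_le_rpow (norm_nonneg _) (norm_add_le _ _) hq.le
    _ ≤ 2 ^ q * ‖f ω‖ ^ q + 2 ^ q * ‖g ω‖ ^ q :=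
        two_rpow_bound hq (norm_nonneg _) (norm_nonneg _)

lemma integrable_norm_rpow_smul {q t : ℝ} {f : Ω → X}
    (hfq : Integrable (fun ω => ‖f ω‖ ^ q) μ) :
    Integrable (fun ω => ‖t • f ω‖ ^ q) μ := by
  have h : (fun ω => ‖t • f ω‖ ^ q) = fun ω => |t| ^ q * ‖f ω‖ ^ q := by
    funext ω
    rw [norm_smul, Real.norm_eq_abs, Real.mul_rpow (abs_nonneg _) (norm_nonneg _)]
  rw [h]
  exact hfq.const_mul _

lemma integrable_norm_rpow_sub {q : ℝ} (hq : 0 < q) {f g : Ω → X}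
    (hf : AEStronglyMeasurable f μ) (hg : AEStronglyMeasurable g μ)
    (hfq : Integrable (fun ω => ‖f ω‖ ^ q) μ) (hgq : Integrable (fun ω => ‖g ω‖ ^ q) μ) :
    Integrable (fun ω => ‖f ω - g ω‖ ^ q) μ := by
  have h : (fun ω => ‖f ω - g ω‖ ^ q) = fun ω => ‖f ω + (-g) ω‖ ^ q := by
    funext ω; rw [Pi.neg_apply, ← sub_eq_add_neg]
  rw [h]
  refine integrable_norm_rpow_add hq hf hg.neg hfq ?_
  have h2 : (fun ω => ‖(-g) ω‖ ^ q) = fun ω => ‖g ω‖ ^ q := by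
    funext ω; rw [Pi.neg_apply, norm_neg]
  rw [h2]; exact hgq

lemma clm_integral_comm {Ω' : Type*} (mΩ : MeasurableSpace Ω') {μ' : MeasureTheory.Measure Ω'}
    {Y : Type*} [NormedAddCommGroup Y] [NormedSpace ℝ Y] [CompleteSpace Y]
    (φ : Y →L[ℝ] ℝ) {f : Ω' → Y} (hf : Integrable f μ') :
    φ (∫ x, f x ∂μ') = ∫ x, φ (f x) ∂μ' := (φ.integral_comp_comm hf).symm

lemma clm_integrable_comp {Ω' : Type*} (mΩ : MeasurableSpace Ω') {μ' : MeasureTheory.Measure Ω'}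
    {Y : Type*} [NormedAddCommGroup Y] [NormedSpace ℝ Y] [CompleteSpace Y]
    (φ : Y →L[ℝ] ℝ) {f : Ω' → Y} (hf : Integrable f μ') :
    Integrable (fun x => φ (f x)) μ' := φ.integrable_comp hf

lemma norm_condexp_le_condexp_norm [CompleteSpace X] [IsFiniteMeasure μ]
    {m : MeasurableSpace Ω} (hm : m ≤ m0) {Z : Ω → X} (hZ : Integrable Z μ) :
    ∀ᵐ ω ∂μ, ‖(μ[Z|m]) ω‖ ≤ (μ[fun ω => ‖Z ω‖|m]) ω := by
  set W := μ[Z|m] with hWdef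
  have hWm : StronglyMeasurable[m] W := stronglyMeasurable_condExp
  have hsep : TopologicalSpace.IsSeparable (Set.range W) := (hWm.mono hm).isSeparable_range
  obtain ⟨c, hc_count, hc_sub⟩ := hsep
  obtain ⟨e, he⟩ := (hc_count.insert 0).exists_eq_range (Set.insert_nonempty 0 c)
  choose φ hφ1 hφ2 using fun n => exists_dual_vector'' ℝ (e n)
  have key : ∀ n : ℕ, ∀ᵐ ω ∂μ, φ n (W ω) ≤ (μ[fun ω => ‖Z ω‖|m]) ω := by
    intro n
    have h1 : (fun ω => φ n (W ω)) =ᵐ[μ] μ[fun ω => φ n (Z ω)|m] := by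
      have hWint : Integrable W μ := integrable_condExp
      refine ae_eq_condExp_of_forall_setIntegral_eq hm (clm_integrable_comp m0 (φ n) hZ)
        (fun s _ _ => (clm_integrable_comp m0 (φ n) hWint.restrict))
        (fun s hs _ => ?_)
        ((((φ n).continuous.comp_stronglyMeasurable hWm : StronglyMeasurable[m] _)).aestronglyMeasurable)
      calc ∫ x in s, φ n (W x) ∂μ = φ n (∫ x in s, W x ∂μ) :=
            (clm_integral_comm m0 (φ n) hWint.restrict).symm
        _ = φ n (∫ x in s, Z x ∂μ) := by rw [hWdef, setIntegral_condExp hm hZ hs]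
        _ = ∫ x in s, φ n (Z x) ∂μ := clm_integral_comm m0 (φ n) hZ.restrict
    have h2 : μ[fun ω => φ n (Z ω)|m] ≤ᵐ[μ] μ[fun ω => ‖Z ω‖|m] := by
      refine condExp_mono (clm_integrable_comp m0 (φ n) hZ) hZ.norm
        (Eventually.of_forall fun ω => ?_)
      calc φ n (Z ω) ≤ ‖φ n (Z ω)‖ := le_abs_self _
        _ ≤ ‖φ n‖ * ‖Z ω‖ := (φ n).le_opNorm _
        _ ≤ 1 * ‖Z ω‖ := mul_le_mul_of_nonneg_right (hφ1 n) (norm_nonneg _)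
        _ = ‖Z ω‖ := one_mul _
    filter_upwards [h1, h2] with ω e1 e2
    rw [e1]; exact e2
  rw [← ae_all_iff] at key
  filter_upwards [key] with ω hω
  have hmem : W ω ∈ closure (Set.range e) := by
    rw [← he]
    exact closure_mono (Set.subset_insert 0 c) (hc_sub (Set.mem_range_self ω))
  refine le_of_forall_pos_le_add fun ε hε => ?_
  obtain ⟨b, ⟨n, rfl⟩, hb⟩ := Metric.mem_closure_iff.mp hmem (ε / 2) (by linarith)
  rw [dist_eq_norm] at hb
  have hb' : ‖e n - W ω‖ < ε / 2 := by rwa [norm_sub_rev] at hb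
  have h3 : ‖e n‖ ≤ φ n (W ω) + ε / 2 := by
    have h4 : φ n (e n) = φ n (W ω) + φ n (e n - W ω) := by
      rw [← map_add]; congr 1; abel
    have h5 : φ n (e n - W ω) ≤ ε / 2 := by
      calc φ n (e n - W ω) ≤ ‖φ n (e n - W ω)‖ := le_abs_self _
        _ ≤ ‖φ n‖ * ‖e n - W ω‖ := (φ n).le_opNorm _
        _ ≤ 1 * ‖e n - W ω‖ := mul_le_mul_of_nonneg_right (hφ1 n) (norm_nonneg _)
        _ ≤ ε / 2 := by rw [one_mul]; exact hb'.le
    have hφ2' : φ n (e n) = ‖e n‖ := by exact_mod_cast hφ2 n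
    rw [← hφ2', h4]; linarith
  have h6 : ‖W ω‖ ≤ ‖e n‖ + ‖W ω - e n‖ := by
    have := norm_sub_norm_le (W ω) (e n); linarith
  have := hω n
  linarith

lemma integral_norm_rpow_condexp_le [CompleteSpace X] [IsFiniteMeasure μ]
    {m : MeasurableSpace Ω} (hm : m ≤ m0) {q : ℝ} (hq1 : 1 < q)
    {Z W : Ω → X} (hZ : Integrable Z μ) (hWm : StronglyMeasurable[m] W)
    (hWeq : μ[Z|m] =ᵐ[μ] W)
    (hZq : Integrable (fun ω => ‖Z ω‖ ^ q) μ) (hWq : Integrable (fun ω => ‖W ω‖ ^ q) μ) :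
    ∫ ω, ‖W ω‖ ^ q ∂μ ≤ ∫ ω, ‖Z ω‖ ^ q ∂μ := by
  have hq0 : (0 : ℝ) < q := by linarith
  set h : Ω → ℝ := fun ω => ‖W ω‖ ^ (q - 1) with hh
  set nZ : Ω → ℝ := fun ω => ‖Z ω‖ with hnZ
  have hWaesm : AEStronglyMeasurable[m0] W μ := (hWm.mono hm).aestronglyMeasurable
  have hhm : StronglyMeasurable[m] h :=
    (Real.continuous_rpow_const (by linarith : (0:ℝ) ≤ q - 1)).comp_stronglyMeasurable hWm.norm
  -- integrability of h * nZ
  have hhZ_int : Integrable (h * nZ) μ := by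
    refine Integrable.mono' (hWq.add hZq)
      (((aesm_norm_rpow (by linarith) hWaesm :
          AEStronglyMeasurable[m0] (fun ω => ‖W ω‖ ^ (q-1)) μ)).mul hZ.aestronglyMeasurable.norm)
      (Eventually.of_forall fun ω => ?_)
    rw [Pi.add_apply, Pi.mul_apply, Real.norm_eq_abs, abs_of_nonneg (by positivity)]
    exact young hq1 (norm_nonneg _) (norm_nonneg _)
  -- h * ‖W‖ = ‖W‖ ^ q
  have hhW_eq : ∀ ω, h ω * ‖W ω‖ = ‖W ω‖ ^ q := fun ω =>
    rpow_sub_one_mul' hq1 (norm_nonneg _)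
  have hhW_int : Integrable (fun ω => h ω * ‖W ω‖) μ := by
    refine hWq.congr ?_
    exact Eventually.of_forall fun ω => (hhW_eq ω).symm
  -- pull-out property
  have pull : μ[h * nZ|m] =ᵐ[μ] h * μ[nZ|m] :=
    condExp_mul_of_stronglyMeasurable_left hhm hhZ_int hZ.norm
  have e1 : ∫ ω, h ω * nZ ω ∂μ = ∫ ω, h ω * (μ[nZ|m]) ω ∂μ := by
    rw [show (∫ ω, h ω * nZ ω ∂μ) = ∫ ω, (h * nZ) ω ∂μ from rfl, ← integral_condExp hm]
    exact integral_congr_ae pull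
  have hjensen : ∀ᵐ ω ∂μ, ‖W ω‖ ≤ (μ[nZ|m]) ω := by
    filter_upwards [norm_condexp_le_condexp_norm hm hZ, hWeq] with ω h1 h2
    rw [← h2]; exact h1
  have e2 : ∫ ω, h ω * ‖W ω‖ ∂μ ≤ ∫ ω, h ω * (μ[nZ|m]) ω ∂μ := by
    refine integral_mono_ae hhW_int (Integrable.congr integrable_condExp pull) ?_
    filter_upwards [hjensen] with ω hω
    exact mul_le_mul_of_nonneg_left hω (by positivity)
  have e3 : ∫ ω, h ω * ‖W ω‖ ∂μ = ∫ ω, ‖W ω‖ ^ q ∂μ := by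
    exact integral_congr_ae (Eventually.of_forall fun ω => hhW_eq ω)
  -- tangent line inequality, integrated
  have tpoint : ∀ ω, ‖W ω‖ ^ q + q * (h ω * nZ ω) - q * (h ω * ‖W ω‖) ≤ ‖Z ω‖ ^ q := by
    intro ω
    have := tangent hq1 (norm_nonneg (W ω)) (norm_nonneg (Z ω))
    have hexp : q * ‖W ω‖ ^ (q-1) * (‖Z ω‖ - ‖W ω‖)
        = q * (h ω * nZ ω) - q * (h ω * ‖W ω‖) := by
      simp only [hh, hnZ]; ring
    linarith [this, hexp.le, hexp.ge]
  have tint : ∫ ω, (‖W ω‖ ^ q + q * (h ω * nZ ω) - q * (h ω * ‖W ω‖)) ∂μ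
      ≤ ∫ ω, ‖Z ω‖ ^ q ∂μ := by
    refine integral_mono ?_ hZq tpoint
    have hI2 : Integrable (fun ω => q * (h ω * nZ ω)) μ := hhZ_int.const_mul q
    have hI3 : Integrable (fun ω => q * (h ω * ‖W ω‖)) μ := hhW_int.const_mul q
    exact (hWq.add hI2).sub hI3
  have split : ∫ ω, (‖W ω‖ ^ q + q * (h ω * nZ ω) - q * (h ω * ‖W ω‖)) ∂μ
      = ∫ ω, ‖W ω‖ ^ q ∂μ + q * ∫ ω, h ω * nZ ω ∂μ - q * ∫ ω, h ω * ‖W ω‖ ∂μ := by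
    have hI2 : Integrable (fun ω => q * (h ω * nZ ω)) μ := hhZ_int.const_mul q
    have hI3 : Integrable (fun ω => q * (h ω * ‖W ω‖)) μ := hhW_int.const_mul q
    have hI1 : Integrable (fun ω => ‖W ω‖ ^ q + q * (h ω * nZ ω)) μ := hWq.add hI2
    rw [integral_sub hI1 hI3, integral_add hWq hI2, integral_const_mul, integral_const_mul]
  rw [split] at tint
  -- combine
  have : ∫ ω, h ω * nZ ω ∂μ ≥ ∫ ω, h ω * ‖W ω‖ ∂μ := by rw [e1]; exact e2
  nlinarith [tint, this, e3, hq0]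

lemma pisier_pointwise {X : Type*} [NormedAddCommGroup X] [NormedSpace ℝ X]
    {q S : ℝ} (hq1 : 1 < q) (hSq : 0 ≤ S ^ q)
    (hS : ∀ x y : X, ‖x + y‖ ^ q + ‖x - y‖ ^ q ≤ 2 * ‖x‖ ^ q + 2 * S ^ q * ‖y‖ ^ q)
    (N : ℕ) (u v : X) :
    ‖u + v‖ ^ q ≤ ‖u‖ ^ q + 2 ^ N * (‖u + ((2 : ℝ) ^ N)⁻¹ • v‖ ^ q - ‖u‖ ^ q)
      + S ^ q * (∑ j ∈ Finset.range N, ((2 : ℝ) ^ (1 - q)) ^ (j + 1)) * ‖v‖ ^ q := by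
  induction N with
  | zero => simp
  | succ N ih =>
    set a : ℝ := ((2 : ℝ) ^ (N + 1))⁻¹ with ha
    have ha0 : 0 < a := by positivity
    have hdouble : a + a = ((2 : ℝ) ^ N)⁻¹ := by
      rw [ha, pow_succ]
      field_simp
      ring
    have hxy : (u + a • v) + a • v = u + ((2 : ℝ) ^ N)⁻¹ • v := by
      rw [add_assoc, ← add_smul, hdouble]
    have hxsuby : (u + a • v) - a • v = u := add_sub_cancel_right u (a • v)
    have key := hS (u + a • v) (a • v)
    rw [hxy, hxsuby, norm_smul, Real.norm_eq_abs, abs_of_pos ha0,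
      Real.mul_rpow ha0.le (norm_nonneg v)] at key
    have htp : (2 : ℝ) ^ (N + 1) * a ^ q = ((2 : ℝ) ^ (1 - q)) ^ (N + 1) := by
      rw [ha]; exact two_pow_identity q (N + 1)
    have h2N : (0 : ℝ) ≤ 2 ^ N := by positivity
    have hk2 := mul_le_mul_of_nonneg_left key h2N
    have expand : (2 : ℝ) ^ N * (2 * ‖u + a • v‖ ^ q + 2 * S ^ q * (a ^ q * ‖v‖ ^ q))
        = 2 ^ (N + 1) * ‖u + a • v‖ ^ q
          + S ^ q * (((2 : ℝ) ^ (1 - q)) ^ (N + 1) * ‖v‖ ^ q) := by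
      rw [← htp]; ring
    rw [expand] at hk2
    rw [Finset.sum_range_succ]
    -- hk2 : 2^N * (A + U) ≤ 2^(N+1) * B + S^q * (r^(N+1) * V)
    have goal2 : ‖u + v‖ ^ q ≤ ‖u‖ ^ q
        + (2 ^ (N+1) * ‖u + a • v‖ ^ q + S ^ q * (((2:ℝ) ^ (1-q)) ^ (N+1) * ‖v‖ ^ q)
            - 2 ^ N * ‖u‖ ^ q - 2 ^ N * ‖u‖ ^ q)
        + S ^ q * (∑ j ∈ Finset.range N, ((2:ℝ) ^ (1 - q)) ^ (j + 1)) * ‖v‖ ^ q := by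
      linarith [ih, hk2]
    have h2succ : ((2:ℝ) ^ (N+1) : ℝ) = 2 ^ N + 2 ^ N := by ring
    calc ‖u + v‖ ^ q ≤ _ := goal2
      _ = ‖u‖ ^ q + 2 ^ (N+1) * (‖u + a • v‖ ^ q - ‖u‖ ^ q)
          + S ^ q * ((∑ j ∈ Finset.range N, ((2:ℝ) ^ (1 - q)) ^ (j + 1))
              + ((2:ℝ) ^ (1-q)) ^ (N+1)) * ‖v‖ ^ q := by rw [h2succ]; ring

lemma pisier_step [CompleteSpace X] [IsProbabilityMeasure μ]
    {q : ℝ} (hq1 : 1 < q)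
    {S : ℝ} (hS0 : 0 ≤ S)
    (hS : ∀ x y : X, ‖x + y‖ ^ q + ‖x - y‖ ^ q ≤ 2 * ‖x‖ ^ q + 2 * S ^ q * ‖y‖ ^ q)
    {ℱ : Filtration ℕ m0} {M : ℕ → Ω → X}
    (hM : Martingale M ℱ μ)
    (hMq : ∀ k, Integrable (fun ω => ‖M k ω‖ ^ q) μ) (k : ℕ) :
    ∫ ω, ‖M (k + 1) ω - M 0 ω‖ ^ q ∂μ ≤ ∫ ω, ‖M k ω - M 0 ω‖ ^ q ∂μ
      + S ^ q / (2 ^ (q - 1) - 1) * ∫ ω, ‖M (k + 1) ω - M k ω‖ ^ q ∂μ := by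
  have hq0 : (0 : ℝ) < q := by linarith
  have hSq : (0 : ℝ) ≤ S ^ q := Real.rpow_nonneg hS0 q
  set r : ℝ := (2 : ℝ) ^ (1 - q) with hrdef
  have hr0 : 0 < r := Real.rpow_pos_of_pos (by norm_num) _
  have hr1 : r < 1 := Real.rpow_lt_one_of_one_lt_of_neg (by norm_num) (by linarith)
  -- basic objects
  set X1 : Ω → X := M k - M 0 with hX1
  set D : Ω → X := M (k + 1) - M k with hD
  have hsm : ∀ j, AEStronglyMeasurable (M j) μ :=
    fun j => ((hM.stronglyMeasurable j).mono (ℱ.le j)).aestronglyMeasurable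
  have hint : ∀ j, Integrable (M j) μ := fun j => hM.integrable j
  have hX1aesm : AEStronglyMeasurable X1 μ := (hsm k).sub (hsm 0)
  have hDaesm : AEStronglyMeasurable D μ := (hsm (k + 1)).sub (hsm k)
  have hX1q : Integrable (fun ω => ‖X1 ω‖ ^ q) μ :=
    integrable_norm_rpow_sub hq0 (hsm k) (hsm 0) (hMq k) (hMq 0)
  have hDq : Integrable (fun ω => ‖D ω‖ ^ q) μ :=
    integrable_norm_rpow_sub hq0 (hsm (k + 1)) (hsm k) (hMq (k + 1)) (hMq k)
  have hX1int : Integrable X1 μ := (hint k).sub (hint 0)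
  have hDint : Integrable D μ := (hint (k + 1)).sub (hint k)
  have hX1m : StronglyMeasurable[ℱ k] X1 :=
    (hM.stronglyMeasurable k).sub ((hM.stronglyMeasurable 0).mono (ℱ.mono (Nat.zero_le k)))
  -- conditional expectation of D is 0
  have hcondD : μ[D|ℱ k] =ᵐ[μ] 0 := by
    have h1 : μ[D|ℱ k] =ᵐ[μ] μ[M (k + 1)|ℱ k] - μ[M k|ℱ k] :=
      condExp_sub (hint (k + 1)) (hint k) (ℱ k)
    have h2 : μ[M (k + 1)|ℱ k] =ᵐ[μ] M k := hM.condExp_ae_eq (Nat.le_succ k)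
    have h3 : μ[M k|ℱ k] = M k :=
      condExp_of_stronglyMeasurable (ℱ.le k) (hM.stronglyMeasurable k) (hint k)
    filter_upwards [h1, h2] with ω e1 e2
    simp only [Pi.sub_apply, Pi.zero_apply] at *
    rw [e1, e2, h3]
    simp
  -- Jensen step: for t ≥ 0, ∫ ‖X1‖^q ≤ ∫ ‖X1 - t • D‖^q
  have jensen : ∀ t : ℝ, ∫ ω, ‖X1 ω‖ ^ q ∂μ ≤ ∫ ω, ‖X1 ω - t • D ω‖ ^ q ∂μ := by
    intro t
    have hZint : Integrable (X1 - t • D) μ := hX1int.sub (hDint.smul t)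
    have hZq : Integrable (fun ω => ‖(X1 - t • D) ω‖ ^ q) μ := by
      simp only [Pi.sub_apply, Pi.smul_apply]
      exact integrable_norm_rpow_sub hq0 hX1aesm (hDaesm.const_smul t) hX1q
        (integrable_norm_rpow_smul hDq)
    have hcond : μ[X1 - t • D|ℱ k] =ᵐ[μ] X1 := by
      have h1 : μ[X1 - t • D|ℱ k] =ᵐ[μ] μ[X1|ℱ k] - μ[t • D|ℱ k] :=
        condExp_sub hX1int (hDint.smul t) (ℱ k)
      have h2 : μ[X1|ℱ k] = X1 :=
        condExp_of_stronglyMeasurable (ℱ.le k) hX1m hX1int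
      have h3 : μ[t • D|ℱ k] =ᵐ[μ] t • μ[D|ℱ k] := condExp_smul t D (ℱ k)
      filter_upwards [h1, h3, hcondD] with ω e1 e3 e4
      simp only [Pi.sub_apply, Pi.smul_apply, Pi.zero_apply] at *
      rw [e1, e3, e4, h2]
      simp
    have := integral_norm_rpow_condexp_le (ℱ.le k) hq1 hZint hX1m hcond hZq hX1q
    simpa only [Pi.sub_apply, Pi.smul_apply] using this
  -- notation for the three integrals
  set IU : ℝ := ∫ ω, ‖X1 ω‖ ^ q ∂μ with hIU
  set IV : ℝ := ∫ ω, ‖D ω‖ ^ q ∂μ with hIV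
  have hIV0 : 0 ≤ IV := integral_nonneg fun ω => Real.rpow_nonneg (norm_nonneg _) q
  -- the N-indexed bound
  have bound : ∀ N : ℕ, ∫ ω, ‖M (k + 1) ω - M 0 ω‖ ^ q ∂μ
      ≤ IU + S ^ q * (∑ j ∈ Finset.range N, r ^ (j + 1)) * IV + 2 * S ^ q * (r ^ N * IV) := by
    intro N
    set t : ℝ := ((2 : ℝ) ^ N)⁻¹ with htdef
    have ht0 : 0 < t := by positivity
    have hAq : Integrable (fun ω => ‖X1 ω + t • D ω‖ ^ q) μ :=
      integrable_norm_rpow_add hq0 hX1aesm (hDaesm.const_smul t) hX1q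
        (integrable_norm_rpow_smul hDq)
    have hZq : Integrable (fun ω => ‖X1 ω - t • D ω‖ ^ q) μ :=
      integrable_norm_rpow_sub hq0 hX1aesm (hDaesm.const_smul t) hX1q
        (integrable_norm_rpow_smul hDq)
    set IA : ℝ := ∫ ω, ‖X1 ω + t • D ω‖ ^ q ∂μ with hIA
    -- (c) : IA - IU ≤ 2 S^q t^q IV
    have hc : IA - IU ≤ 2 * S ^ q * (t ^ q * IV) := by
      have hZint2 : ∫ ω, ‖X1 ω - t • D ω‖ ^ q ∂μ ≥ IU := jensen t
      have hsum : IA + ∫ ω, ‖X1 ω - t • D ω‖ ^ q ∂μ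
          ≤ 2 * IU + 2 * S ^ q * (t ^ q * IV) := by
        have hpoint : ∀ ω, ‖X1 ω + t • D ω‖ ^ q + ‖X1 ω - t • D ω‖ ^ q
            ≤ 2 * ‖X1 ω‖ ^ q + 2 * S ^ q * (t ^ q * ‖D ω‖ ^ q) := by
          intro ω
          have := hS (X1 ω) (t • D ω)
          rwa [norm_smul, Real.norm_eq_abs, abs_of_pos ht0,
            Real.mul_rpow ht0.le (norm_nonneg _)] at this
        have hi1 : ∫ ω, (‖X1 ω + t • D ω‖ ^ q + ‖X1 ω - t • D ω‖ ^ q) ∂μ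
            ≤ ∫ ω, (2 * ‖X1 ω‖ ^ q + 2 * S ^ q * (t ^ q * ‖D ω‖ ^ q)) ∂μ := by
          refine integral_mono (hAq.add hZq) ?_ hpoint
          exact (hX1q.const_mul 2).add ((hDq.const_mul (t ^ q)).const_mul (2 * S ^ q))
        rw [integral_add hAq hZq] at hi1
        have hi2 : ∫ ω, (2 * ‖X1 ω‖ ^ q + 2 * S ^ q * (t ^ q * ‖D ω‖ ^ q)) ∂μ
            = 2 * IU + 2 * S ^ q * (t ^ q * IV) := by
          have e1 : Integrable (fun ω => 2 * ‖X1 ω‖ ^ q) μ := hX1q.const_mul 2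
          have e2 : Integrable (fun ω => 2 * S ^ q * (t ^ q * ‖D ω‖ ^ q)) μ :=
            (hDq.const_mul (t ^ q)).const_mul (2 * S ^ q)
          rw [integral_add e1 e2, integral_const_mul]
          congr 1
          rw [show (fun ω => 2 * S ^ q * (t ^ q * ‖D ω‖ ^ q))
              = fun ω => (2 * S ^ q * t ^ q) * ‖D ω‖ ^ q by funext ω; ring, integral_const_mul]
          ring
        rw [hi2] at hi1
        exact hi1
      linarith
    -- (a)+(b) : main integral bound for this N
    have hgoal_eq : (fun ω => ‖M (k + 1) ω - M 0 ω‖ ^ q)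
        = fun ω => ‖X1 ω + D ω‖ ^ q := by
      funext ω
      congr 2
      simp only [hX1, hD, Pi.sub_apply]
      abel
    have hpt : ∀ ω, ‖X1 ω + D ω‖ ^ q
        ≤ (1 - 2 ^ N) * ‖X1 ω‖ ^ q + 2 ^ N * ‖X1 ω + t • D ω‖ ^ q
          + (S ^ q * (∑ j ∈ Finset.range N, r ^ (j + 1))) * ‖D ω‖ ^ q := by
      intro ω
      have := pisier_pointwise hq1 hSq hS N (X1 ω) (D ω)
      rw [← htdef] at this
      rw [hrdef]
      linarith
    have hInt2 : ∫ ω, ‖X1 ω + D ω‖ ^ q ∂μ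
        ≤ (1 - 2 ^ N) * IU + 2 ^ N * IA
          + (S ^ q * (∑ j ∈ Finset.range N, r ^ (j + 1))) * IV := by
      have e0 : Integrable (fun ω => ‖X1 ω + D ω‖ ^ q) μ :=
        integrable_norm_rpow_add hq0 hX1aesm hDaesm hX1q hDq
      have e1 : Integrable (fun ω => (1 - 2 ^ N) * ‖X1 ω‖ ^ q) μ := hX1q.const_mul _
      have e2 : Integrable (fun ω => (2:ℝ) ^ N * ‖X1 ω + t • D ω‖ ^ q) μ := hAq.const_mul _
      have e3 : Integrable
          (fun ω => (S ^ q * (∑ j ∈ Finset.range N, r ^ (j + 1))) * ‖D ω‖ ^ q) μ :=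
        hDq.const_mul _
      calc ∫ ω, ‖X1 ω + D ω‖ ^ q ∂μ
          ≤ ∫ ω, ((1 - 2 ^ N) * ‖X1 ω‖ ^ q + 2 ^ N * ‖X1 ω + t • D ω‖ ^ q
              + (S ^ q * (∑ j ∈ Finset.range N, r ^ (j + 1))) * ‖D ω‖ ^ q) ∂μ := by
            refine integral_mono e0 ((e1.add e2).add e3) hpt
        _ = (1 - 2 ^ N) * IU + 2 ^ N * IA
              + (S ^ q * (∑ j ∈ Finset.range N, r ^ (j + 1))) * IV := by
            have e12 : Integrable (fun ω => (1 - 2 ^ N) * ‖X1 ω‖ ^ q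
                + (2:ℝ) ^ N * ‖X1 ω + t • D ω‖ ^ q) μ := e1.add e2
            rw [integral_add e12 e3, integral_add e1 e2,
              integral_const_mul, integral_const_mul, integral_const_mul]
    -- combine with (c)
    have htpow : (2 : ℝ) ^ N * t ^ q = r ^ N := by
      rw [htdef, hrdef]; exact two_pow_identity q N
    have hmul := mul_le_mul_of_nonneg_left hc (by positivity : (0:ℝ) ≤ (2:ℝ) ^ N)
    -- 2^N * (IA - IU) ≤ 2^N * (2 S^q (t^q IV)) = 2 S^q (r^N IV)
    have hmul2 : (2:ℝ) ^ N * (2 * S ^ q * (t ^ q * IV)) = 2 * S ^ q * (r ^ N * IV) := by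
      rw [← htpow]; ring
    rw [hmul2] at hmul
    rw [hgoal_eq]
    calc ∫ ω, ‖X1 ω + D ω‖ ^ q ∂μ
        ≤ (1 - 2 ^ N) * IU + 2 ^ N * IA
            + (S ^ q * (∑ j ∈ Finset.range N, r ^ (j + 1))) * IV := hInt2
      _ ≤ IU + S ^ q * (∑ j ∈ Finset.range N, r ^ (j + 1)) * IV
            + 2 * S ^ q * (r ^ N * IV) := by nlinarith [hmul]
  -- pass to the limit N → ∞
  have hgeom : Tendsto (fun N : ℕ => ∑ j ∈ Finset.range N, r ^ (j + 1)) atTop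
      (nhds (r * (1 - r)⁻¹)) := by
    have h1 : (fun N : ℕ => ∑ j ∈ Finset.range N, r ^ (j + 1))
        = fun N : ℕ => r * ∑ j ∈ Finset.range N, r ^ j := by
      funext N
      rw [Finset.mul_sum]
      exact Finset.sum_congr rfl fun j _ => by rw [pow_succ]; ring
    rw [h1]
    exact ((hasSum_geometric_of_lt_one hr0.le hr1).tendsto_sum_nat).const_mul r
  have hrN : Tendsto (fun N : ℕ => (2:ℝ) * S ^ q * (r ^ N * IV)) atTop (nhds 0) := by
    have := (tendsto_pow_atTop_nhds_zero_of_lt_one hr0.le hr1).mul_const IV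
    have h2 := this.const_mul ((2:ℝ) * S ^ q)
    simpa using h2
  have hT : Tendsto (fun N : ℕ => IU + S ^ q * (∑ j ∈ Finset.range N, r ^ (j + 1)) * IV
      + 2 * S ^ q * (r ^ N * IV)) atTop
      (nhds (IU + S ^ q * (r * (1 - r)⁻¹) * IV + 0)) := by
    exact (tendsto_const_nhds.add (((hgeom.const_mul (S ^ q)).mul_const IV))).add hrN
  have hlim : ∫ ω, ‖M (k + 1) ω - M 0 ω‖ ^ q ∂μ
      ≤ IU + S ^ q * (r * (1 - r)⁻¹) * IV + 0 :=
    ge_of_tendsto hT (Eventually.of_forall bound)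
  -- identify the constant
  have hs1 : (1 : ℝ) < 2 ^ (q - 1) :=
    Real.one_lt_rpow_iff_of_pos (by norm_num) |>.mpr (Or.inl ⟨by norm_num, by linarith⟩)
  have hrs : r = ((2 : ℝ) ^ (q - 1))⁻¹ := by
    rw [hrdef, show (1 - q) = -(q - 1) by ring, Real.rpow_neg (by norm_num : (0:ℝ) ≤ 2)]
  have hconst : r * (1 - r)⁻¹ = ((2 : ℝ) ^ (q - 1) - 1)⁻¹ := by
    rw [hrs]
    have hspos : (0 : ℝ) < 2 ^ (q - 1) := by linarith
    have hs1' : (2 : ℝ) ^ (q - 1) - 1 ≠ 0 := by intro h; linarith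
    field_simp
  rw [hconst] at hlim
  have heq : S ^ q * ((2 : ℝ) ^ (q - 1) - 1)⁻¹ * IV = S ^ q / (2 ^ (q - 1) - 1) * IV := by
    rw [div_eq_mul_inv]
  have hfinal : ∫ ω, ‖M (k + 1) ω - M 0 ω‖ ^ q ∂μ
      ≤ IU + S ^ q / (2 ^ (q - 1) - 1) * IV := by linarith [hlim, heq.le, heq.ge]
  exact hfinal

end PisierAux

open PisierAux in
/-- Pisier's martingale inequality in `q`-smooth spaces: for `1 < q ≤ 2` and a Banach
space `X` with `q`-smoothness constant `S`, every `X`-valued martingale `{M_k}` with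
finite `q`-th moments satisfies
`E‖M_n - M_0‖^q ≤ (S^q/(2^{q-1}-1)) ∑_{k<n} E‖M_{k+1} - M_k‖^q`. -/
theorem pisier_martingale_inequality
    {Ω X : Type*} {m0 : MeasurableSpace Ω} (μ : Measure Ω) [IsProbabilityMeasure μ]
    [NormedAddCommGroup X] [NormedSpace ℝ X] [CompleteSpace X]
    (q : ℝ) (hq1 : 1 < q) (hq2 : q ≤ 2)
    (S : ℝ) (hS0 : 0 ≤ S)
    (hS : ∀ x y : X, ‖x + y‖ ^ q + ‖x - y‖ ^ q ≤ 2 * ‖x‖ ^ q + 2 * S ^ q * ‖y‖ ^ q)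
    (ℱ : Filtration ℕ m0) (M : ℕ → Ω → X)
    (hM : Martingale M ℱ μ)
    (hMq : ∀ k, Integrable (fun ω => ‖M k ω‖ ^ q) μ)
    (n : ℕ) :
    ∫ ω, ‖M n ω - M 0 ω‖ ^ q ∂μ ≤
      S ^ q / (2 ^ (q - 1) - 1) *
        ∑ k ∈ Finset.range n, ∫ ω, ‖M (k + 1) ω - M k ω‖ ^ q ∂μ := by
  have hq0 : (0 : ℝ) < q := by linarith
  have hs1 : (1 : ℝ) < 2 ^ (q - 1) :=
    Real.one_lt_rpow_iff_of_pos (by norm_num) |>.mpr (Or.inl ⟨by norm_num, by linarith⟩)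
  have hK0 : 0 ≤ S ^ q / (2 ^ (q - 1) - 1) :=
    div_nonneg (Real.rpow_nonneg hS0 q) (by linarith)
  induction n with
  | zero =>
    have h0 : ∫ ω, ‖M 0 ω - M 0 ω‖ ^ q ∂μ = 0 := by
      have h1 : (fun ω => ‖M 0 ω - M 0 ω‖ ^ q) = fun _ => (0 : ℝ) := by
        funext ω
        rw [sub_self, norm_zero, Real.zero_rpow (ne_of_gt hq0)]
      rw [h1, integral_zero]
    rw [h0]
    simp
  | succ n ih =>
    have hstep := pisier_step hq1 hS0 hS hM hMq n
    have hterm0 : 0 ≤ ∫ ω, ‖M (n + 1) ω - M n ω‖ ^ q ∂μ :=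
      integral_nonneg fun ω => Real.rpow_nonneg (norm_nonneg _) q
    calc ∫ ω, ‖M (n + 1) ω - M 0 ω‖ ^ q ∂μ
        ≤ ∫ ω, ‖M n ω - M 0 ω‖ ^ q ∂μ
          + S ^ q / (2 ^ (q - 1) - 1) * ∫ ω, ‖M (n + 1) ω - M n ω‖ ^ q ∂μ := hstep
      _ ≤ S ^ q / (2 ^ (q - 1) - 1) *
            (∑ k ∈ Finset.range n, ∫ ω, ‖M (k + 1) ω - M k ω‖ ^ q ∂μ)
          + S ^ q / (2 ^ (q - 1) - 1) * ∫ ω, ‖M (n + 1) ω - M n ω‖ ^ q ∂μ := by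
            linarith [ih]
      _ = S ^ q / (2 ^ (q - 1) - 1) *
            ∑ k ∈ Finset.range (n + 1), ∫ ω, ‖M (k + 1) ω - M k ω‖ ^ q ∂μ := by
            rw [Finset.sum_range_succ, mul_add]
end

section
/- Fix 1 < q ≤ 2 and let X be a normed space with finite q-smoothness constant S_q(X). Then X has Markov type q with constant M_q(X) ≤ 8 (2^{q+1} - 4)^{-1/q} S_q(X): for every stationary reversible finite Markov chain {Z_t} on {1,...,n}, every f: {1,...,n} → X and every t ≥ 1, E‖f(Z_t) - f(Z_0)‖^q ≤ (2^{3q-2} S_q(X)^q / (2^{q-1} - 1)) · t · E‖f(Z_1) - f(Z_0)‖^q. -/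
open Finset

private lemma two_point {p a b : ℝ} (hp : 1 ≤ p) (ha : 0 ≤ a) (hb : 0 ≤ b) :
    (a + b) ^ p ≤ 2 ^ (p - 1) * (a ^ p + b ^ p) := by
  have h := NNReal.rpow_add_le_mul_rpow_add_rpow a.toNNReal b.toNNReal hp
  have h2 := (NNReal.coe_le_coe).2 h
  push_cast at h2
  simpa [Real.coe_toNNReal a ha, Real.coe_toNNReal b hb] using h2

private lemma jensen_norm {X : Type*} [NormedAddCommGroup X] [NormedSpace ℝ X]
    {n : ℕ} (w : Fin n → ℝ) (v : Fin n → X) (hw : ∀ j, 0 ≤ w j) (hw1 : ∑ j, w j = 1)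
    {p : ℝ} (hp : 1 ≤ p) : ‖∑ j, w j • v j‖ ^ p ≤ ∑ j, w j * ‖v j‖ ^ p := by
  calc ‖∑ j, w j • v j‖ ^ p ≤ (∑ j, w j * ‖v j‖) ^ p := by
        apply Real.rpow_le_rpow (norm_nonneg _) _ (le_trans zero_le_one hp)
        refine (norm_sum_le _ _).trans (le_of_eq ?_)
        refine Finset.sum_congr rfl fun j _ => ?_
        rw [norm_smul, Real.norm_eq_abs, abs_of_nonneg (hw j)]
    _ ≤ ∑ j, w j * ‖v j‖ ^ p :=
        Real.rpow_arith_mean_le_arith_mean_rpow univ w _ (fun j _ => hw j) hw1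
          (fun j _ => norm_nonneg _) hp

private def Wt {n : ℕ} (A : Matrix (Fin n) (Fin n) ℝ) : (s : ℕ) → (Fin (s+1) → Fin n) → ℝ
  | 0, _ => 1
  | (s+1), p => A (p 0) (p 1) * Wt A s (Fin.tail p)

private lemma Wt_nonneg {n : ℕ} {A : Matrix (Fin n) (Fin n) ℝ} (hA0 : ∀ i j, 0 ≤ A i j) :
    ∀ (s : ℕ) (p : Fin (s+1) → Fin n), 0 ≤ Wt A s p
  | 0, _ => by norm_num [Wt]
  | (s+1), p => mul_nonneg (hA0 _ _) (Wt_nonneg hA0 s (Fin.tail p))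

private lemma sum_cons_decomp {n s : ℕ} (F : (Fin (s+2) → Fin n) → ℝ) :
    ∑ p : Fin (s+2) → Fin n, F p
      = ∑ i, ∑ p' : Fin (s+1) → Fin n, F (Fin.cons i p' : Fin (s+2) → Fin n) := by
  rw [← (Fin.consEquiv (fun _ : Fin (s+2) => Fin n)).sum_comp F, Fintype.sum_prod_type]
  rfl

private lemma sum_snoc_decomp {n s : ℕ} (F : (Fin (s+2) → Fin n) → ℝ) :
    ∑ p : Fin (s+2) → Fin n, F p
      = ∑ p' : Fin (s+1) → Fin n, ∑ j, F (Fin.snoc p' j : Fin (s+2) → Fin n) := by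
  rw [← (Fin.snocEquiv (fun _ : Fin (s+2) => Fin n)).sum_comp F, Fintype.sum_prod_type,
    Finset.sum_comm]
  rfl

private lemma tail_snoc' {n s : ℕ} (p' : Fin (s+2) → Fin n) (j : Fin n) :
    Fin.tail (Fin.snoc p' j : Fin (s+3) → Fin n)
      = (Fin.snoc (Fin.tail p') j : Fin (s+2) → Fin n) := by
  funext r
  refine Fin.lastCases ?_ (fun r => ?_) r
  · show (Fin.snoc p' j : Fin (s+3) → Fin n) (Fin.last (s+1)).succ = _
    rw [Fin.succ_last, Fin.snoc_last, Fin.snoc_last]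
  · show (Fin.snoc p' j : Fin (s+3) → Fin n) (r.castSucc).succ = _
    rw [Fin.succ_castSucc, Fin.snoc_castSucc, Fin.snoc_castSucc]
    rfl

private lemma Wt_snoc {n : ℕ} (A : Matrix (Fin n) (Fin n) ℝ) :
    ∀ (s : ℕ) (p' : Fin (s+1) → Fin n) (j : Fin n),
      Wt A (s+1) (Fin.snoc p' j : Fin (s+2) → Fin n) = Wt A s p' * A (p' (Fin.last s)) j
  | 0, p', j => by
      have h0 : (Fin.snoc p' j : Fin 2 → Fin n) 0 = p' 0 := by
        rw [show (0 : Fin 2) = Fin.castSucc 0 from rfl, Fin.snoc_castSucc]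
      have h1 : (Fin.snoc p' j : Fin 2 → Fin n) 1 = j := by
        rw [show (1 : Fin 2) = Fin.last 1 from rfl, Fin.snoc_last]
      show A ((Fin.snoc p' j : Fin 2 → Fin n) 0) ((Fin.snoc p' j : Fin 2 → Fin n) 1) * Wt A 0 _
          = Wt A 0 p' * A (p' (Fin.last 0)) j
      rw [h0, h1]
      show A (p' 0) j * 1 = 1 * A (p' (Fin.last 0)) j
      rw [show Fin.last 0 = 0 from rfl]; ring
  | (s+1), p', j => by
      have h0 : (Fin.snoc p' j : Fin (s+3) → Fin n) 0 = p' 0 := by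
        rw [show (0 : Fin (s+3)) = Fin.castSucc 0 from rfl, Fin.snoc_castSucc]
      have h1 : (Fin.snoc p' j : Fin (s+3) → Fin n) 1 = p' 1 := by
        rw [show (1 : Fin (s+3)) = Fin.castSucc 1 from rfl, Fin.snoc_castSucc]
      show A ((Fin.snoc p' j : Fin (s+3) → Fin n) 0) ((Fin.snoc p' j : Fin (s+3) → Fin n) 1)
            * Wt A (s+1) (Fin.tail (Fin.snoc p' j : Fin (s+3) → Fin n))
          = Wt A (s+1) p' * A (p' (Fin.last (s+1))) j
      rw [h0, h1, tail_snoc', Wt_snoc A s (Fin.tail p') j]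
      have h2 : Fin.tail p' (Fin.last s) = p' (Fin.last (s+1)) := by
        show p' (Fin.last s).succ = _
        rw [Fin.succ_last]
      rw [h2]
      show _ = A (p' 0) (p' 1) * Wt A s (Fin.tail p') * A (p' (Fin.last (s+1))) j
      ring

section
variable {n : ℕ}

private lemma cons_one {s : ℕ} (i : Fin n) (p' : Fin (s+1) → Fin n) :
    (Fin.cons i p' : Fin (s+2) → Fin n) 1 = p' 0 := by
  rw [show (1 : Fin (s+2)) = (0 : Fin (s+1)).succ from rfl, Fin.cons_succ]

private lemma cons_last {s : ℕ} (i : Fin n) (p' : Fin (s+1) → Fin n) :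
    (Fin.cons i p' : Fin (s+2) → Fin n) (Fin.last (s+1)) = p' (Fin.last s) := by
  rw [← Fin.succ_last, Fin.cons_succ]

private lemma Wt_cons {A : Matrix (Fin n) (Fin n) ℝ} {s : ℕ} (i : Fin n)
    (p' : Fin (s+1) → Fin n) :
    Wt A (s+1) (Fin.cons i p' : Fin (s+2) → Fin n) = A i (p' 0) * Wt A s p' := by
  show A ((Fin.cons i p' : Fin (s+2) → Fin n) 0) ((Fin.cons i p' : Fin (s+2) → Fin n) 1)
      * Wt A s (Fin.tail (Fin.cons i p' : Fin (s+2) → Fin n)) = _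
  simp only [Fin.cons_zero, cons_one, Fin.tail_cons]

private lemma marg (A : Matrix (Fin n) (Fin n) ℝ) :
    ∀ (s : ℕ) (ρ : Fin n → ℝ) (H : Fin n → Fin n → ℝ),
      ∑ p : Fin (s+1) → Fin n, ρ (p 0) * Wt A s p * H (p 0) (p (Fin.last s))
        = ∑ i, ∑ j, ρ i * (A ^ s) i j * H i j
  | 0, ρ, H => by
      rw [← (Equiv.funUnique (Fin 1) (Fin n)).symm.sum_comp]
      simp [Wt, Matrix.one_apply]
  | (s+1), ρ, H => by
      rw [sum_cons_decomp]
      have key : ∀ i : Fin n,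
          ∑ p' : Fin (s+1) → Fin n,
            ρ ((Fin.cons i p' : Fin (s+2) → Fin n) 0) * Wt A (s+1) (Fin.cons i p')
              * H ((Fin.cons i p' : Fin (s+2) → Fin n) 0)
                  ((Fin.cons i p' : Fin (s+2) → Fin n) (Fin.last (s+1)))
          = ∑ k, ∑ j, (A i) k * (A ^ s) k j * (ρ i * H i j) := by
        intro i
        rw [← marg A s (A i) (fun _ j => ρ i * H i j)]
        refine Finset.sum_congr rfl fun p' _ => ?_
        rw [Fin.cons_zero, cons_last, Wt_cons]
        ring
      rw [Finset.sum_congr rfl fun i _ => key i]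
      rw [pow_succ']
      refine Finset.sum_congr rfl fun i _ => ?_
      rw [Finset.sum_comm]
      refine Finset.sum_congr rfl fun j _ => ?_
      rw [Matrix.mul_apply]
      simp only [Finset.mul_sum, Finset.sum_mul]
      exact Finset.sum_congr rfl fun k _ => by ring

private lemma rowsum_pow {A : Matrix (Fin n) (Fin n) ℝ} (hA1 : ∀ i, ∑ j, A i j = 1) :
    ∀ (s : ℕ) (i : Fin n), ∑ j, (A ^ s) i j = 1
  | 0, i => by simp [Matrix.one_apply]
  | (s+1), i => by
      simp only [pow_succ', Matrix.mul_apply]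
      rw [Finset.sum_comm]
      calc ∑ k, ∑ j, A i k * (A ^ s) k j = ∑ k, A i k * ∑ j, (A ^ s) k j := by
            simp [Finset.mul_sum]
        _ = 1 := by simp [rowsum_pow hA1 s, hA1 i]

private lemma stat_pow {π : Fin n → ℝ} {A : Matrix (Fin n) (Fin n) ℝ}
    (hstat : ∀ j, ∑ i, π i * A i j = π j) :
    ∀ (s : ℕ) (j : Fin n), ∑ i, π i * (A ^ s) i j = π j
  | 0, j => by simp [Matrix.one_apply]
  | (s+1), j => by
      simp only [pow_succ, Matrix.mul_apply, Finset.mul_sum]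
      rw [Finset.sum_comm]
      calc ∑ k, ∑ i, π i * ((A ^ s) i k * A k j)
          = ∑ k, (∑ i, π i * (A ^ s) i k) * A k j := by
            refine Finset.sum_congr rfl fun k _ => ?_
            rw [Finset.sum_mul]
            exact Finset.sum_congr rfl fun i _ => by ring
        _ = π j := by
            simp only [stat_pow hstat s]
            exact hstat j

private lemma marg_first {π : Fin n → ℝ} {A : Matrix (Fin n) (Fin n) ℝ}
    (hA1 : ∀ i, ∑ j, A i j = 1) (s : ℕ) (h : Fin n → ℝ) :
    ∑ p : Fin (s+1) → Fin n, π (p 0) * Wt A s p * h (p 0) = ∑ i, π i * h i := by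
  calc ∑ p : Fin (s+1) → Fin n, π (p 0) * Wt A s p * h (p 0)
      = ∑ i, ∑ j, π i * (A ^ s) i j * h i := marg A s π fun i _ => h i
    _ = ∑ i, π i * h i := by
        refine Finset.sum_congr rfl fun i _ => ?_
        calc ∑ j, π i * (A ^ s) i j * h i = (π i * h i) * ∑ j, (A ^ s) i j := by
              rw [Finset.mul_sum]
              exact Finset.sum_congr rfl fun j _ => by ring
          _ = π i * h i := by rw [rowsum_pow hA1 s i, mul_one]

private lemma marg_last {π : Fin n → ℝ} {A : Matrix (Fin n) (Fin n) ℝ}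
    (hstat : ∀ j, ∑ i, π i * A i j = π j) (s : ℕ) (h : Fin n → ℝ) :
    ∑ p : Fin (s+1) → Fin n, π (p 0) * Wt A s p * h (p (Fin.last s)) = ∑ i, π i * h i := by
  calc ∑ p : Fin (s+1) → Fin n, π (p 0) * Wt A s p * h (p (Fin.last s))
      = ∑ i, ∑ j, π i * (A ^ s) i j * h j := marg A s π fun _ j => h j
    _ = ∑ j, π j * h j := by
        rw [Finset.sum_comm]
        refine Finset.sum_congr rfl fun j _ => ?_
        calc ∑ i, π i * (A ^ s) i j * h j = (∑ i, π i * (A ^ s) i j) * h j := by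
              rw [Finset.sum_mul]
          _ = π j * h j := by rw [stat_pow hstat s j]
end


section
variable {X : Type*} [NormedAddCommGroup X] [NormedSpace ℝ X] {n : ℕ}

private def gF (A : Matrix (Fin n) (Fin n) ℝ) (f : Fin n → X) (k : Fin n) : X :=
  (∑ j, A k j • f j) - f k

private def dF (A : Matrix (Fin n) (Fin n) ℝ) (f : Fin n → X) (k j : Fin n) : X :=
  f j - f k - gF A f k

private lemma dF_avg {A : Matrix (Fin n) (Fin n) ℝ} (hA1 : ∀ i, ∑ j, A i j = 1)
    (f : Fin n → X) (k : Fin n) : ∑ j, A k j • dF A f k j = 0 := by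
  have h1 : ∑ j, A k j • dF A f k j
      = (∑ j, A k j • f j) - (∑ j, A k j) • f k - (∑ j, A k j) • gF A f k := by
    rw [Finset.sum_smul, Finset.sum_smul, ← Finset.sum_sub_distrib, ← Finset.sum_sub_distrib]
    exact Finset.sum_congr rfl fun j _ => by rw [dF, smul_sub, smul_sub]
  rw [h1, hA1 k, one_smul, one_smul, gF]
  abel

private lemma gF_eq {A : Matrix (Fin n) (Fin n) ℝ} (hA1 : ∀ i, ∑ j, A i j = 1)
    (f : Fin n → X) (k : Fin n) : gF A f k = ∑ j, A k j • (f j - f k) := by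
  have : ∑ j, A k j • (f j - f k) = (∑ j, A k j • f j) - (∑ j, A k j) • f k := by
    rw [Finset.sum_smul, ← Finset.sum_sub_distrib]
    exact Finset.sum_congr rfl fun j _ => by rw [smul_sub]
  rw [this, hA1 k, one_smul, gF]

private lemma core_step {q S : ℝ} (hq1 : 1 < q)
    (hS : ∀ x y : X, ‖x + y‖ ^ q + ‖x - y‖ ^ q ≤ 2 * ‖x‖ ^ q + 2 * S ^ q * ‖y‖ ^ q)
    {A : Matrix (Fin n) (Fin n) ℝ} (hA0 : ∀ i j, 0 ≤ A i j) (hA1 : ∀ i, ∑ j, A i j = 1)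
    (f : Fin n → X) (k : Fin n) (x : X) :
    ∑ j, A k j * ‖x + dF A f k j‖ ^ q
      ≤ ‖x‖ ^ q + 2 * S ^ q * ∑ j, A k j * ‖dF A f k j‖ ^ q := by
  have jen : ‖x‖ ^ q ≤ ∑ j, A k j * ‖x - dF A f k j‖ ^ q := by
    have h0 : ∑ j, A k j • (x - dF A f k j) = x := by
      have : ∑ j, A k j • (x - dF A f k j)
          = (∑ j, A k j) • x - ∑ j, A k j • dF A f k j := by
        rw [Finset.sum_smul, ← Finset.sum_sub_distrib]
        exact Finset.sum_congr rfl fun j _ => by rw [smul_sub]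
      rw [this, dF_avg hA1 f k, hA1 k, one_smul, sub_zero]
    calc ‖x‖ ^ q = ‖∑ j, A k j • (x - dF A f k j)‖ ^ q := by rw [h0]
      _ ≤ ∑ j, A k j * ‖x - dF A f k j‖ ^ q :=
          jensen_norm (A k) _ (hA0 k) (hA1 k) hq1.le
  have expand : ∑ j, A k j * (2 * ‖x‖ ^ q + 2 * S ^ q * ‖dF A f k j‖ ^ q
        - ‖x - dF A f k j‖ ^ q)
      = 2 * ‖x‖ ^ q + 2 * S ^ q * (∑ j, A k j * ‖dF A f k j‖ ^ q)
        - ∑ j, A k j * ‖x - dF A f k j‖ ^ q := by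
    have e1 : ∀ j : Fin n, A k j * (2 * ‖x‖ ^ q + 2 * S ^ q * ‖dF A f k j‖ ^ q
          - ‖x - dF A f k j‖ ^ q)
        = A k j * (2 * ‖x‖ ^ q) + 2 * S ^ q * (A k j * ‖dF A f k j‖ ^ q)
          - A k j * ‖x - dF A f k j‖ ^ q := fun j => by ring
    rw [Finset.sum_congr rfl fun j _ => e1 j, Finset.sum_sub_distrib, Finset.sum_add_distrib,
      ← Finset.sum_mul, hA1 k, one_mul, ← Finset.mul_sum]
  calc ∑ j, A k j * ‖x + dF A f k j‖ ^ q
      ≤ ∑ j, A k j * (2 * ‖x‖ ^ q + 2 * S ^ q * ‖dF A f k j‖ ^ q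
          - ‖x - dF A f k j‖ ^ q) := by
        refine Finset.sum_le_sum fun j _ => mul_le_mul_of_nonneg_left ?_ (hA0 k j)
        linarith [hS x (dF A f k j)]
    _ = 2 * ‖x‖ ^ q + 2 * S ^ q * (∑ j, A k j * ‖dF A f k j‖ ^ q)
        - ∑ j, A k j * ‖x - dF A f k j‖ ^ q := expand
    _ ≤ ‖x‖ ^ q + 2 * S ^ q * ∑ j, A k j * ‖dF A f k j‖ ^ q := by linarith

private def Psi (A : Matrix (Fin n) (Fin n) ℝ) (f : Fin n → X) (s : ℕ)
    (p : Fin (s+1) → Fin n) : X :=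
  f (p 0) - f (p (Fin.last s)) + gF A f (p (Fin.last s)) - ∑ r : Fin s, gF A f (p r.succ)

private def Phi (A : Matrix (Fin n) (Fin n) ℝ) (f : Fin n → X) (s : ℕ)
    (p : Fin (s+1) → Fin n) : X :=
  f (p (Fin.last s)) - f (p 0) + gF A f (p 0) - ∑ r : Fin s, gF A f (p r.castSucc)

private lemma cons_last' {s : ℕ} (i : Fin n) (p' : Fin (s+1) → Fin n) :
    (Fin.cons i p' : Fin (s+2) → Fin n) (Fin.last (s+1)) = p' (Fin.last s) := by
  rw [← Fin.succ_last, Fin.cons_succ]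

private lemma Psi_cons (A : Matrix (Fin n) (Fin n) ℝ) (f : Fin n → X) (s : ℕ)
    (i : Fin n) (p' : Fin (s+1) → Fin n) :
    Psi A f (s+1) (Fin.cons i p' : Fin (s+2) → Fin n) = Psi A f s p' + dF A f (p' 0) i := by
  unfold Psi dF
  rw [cons_last', Fin.cons_zero]
  have hsum : ∑ r : Fin (s+1), gF A f ((Fin.cons i p' : Fin (s+2) → Fin n) r.succ)
      = gF A f (p' 0) + ∑ r : Fin s, gF A f (p' r.succ) := by
    have e : ∀ r : Fin (s+1), gF A f ((Fin.cons i p' : Fin (s+2) → Fin n) r.succ)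
        = gF A f (p' r) := fun r => by rw [Fin.cons_succ]
    rw [Finset.sum_congr rfl fun r _ => e r, Fin.sum_univ_succ]
  rw [hsum]
  abel

private lemma Phi_snoc (A : Matrix (Fin n) (Fin n) ℝ) (f : Fin n → X) (s : ℕ)
    (p' : Fin (s+1) → Fin n) (j : Fin n) :
    Phi A f (s+1) (Fin.snoc p' j : Fin (s+2) → Fin n)
      = Phi A f s p' + dF A f (p' (Fin.last s)) j := by
  unfold Phi dF
  rw [Fin.snoc_last, show (Fin.snoc p' j : Fin (s+2) → Fin n) 0 = p' 0 by
    rw [show (0 : Fin (s+2)) = Fin.castSucc 0 from rfl, Fin.snoc_castSucc]]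
  have hsum : ∑ r : Fin (s+1), gF A f ((Fin.snoc p' j : Fin (s+2) → Fin n) r.castSucc)
      = ∑ r : Fin s, gF A f (p' r.castSucc) + gF A f (p' (Fin.last s)) := by
    rw [Fin.sum_univ_castSucc]
    congr 1
    · refine Finset.sum_congr rfl fun r _ => ?_
      rw [Fin.snoc_castSucc]
    · rw [Fin.snoc_castSucc]
  rw [hsum]
  abel

private lemma Phi_sub_Psi (A : Matrix (Fin n) (Fin n) ℝ) (f : Fin n → X) (s : ℕ)
    (p : Fin (s+1) → Fin n) :
    Phi A f s p - Psi A f s p = (2 : ℝ) • (f (p (Fin.last s)) - f (p 0)) := by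
  unfold Phi Psi
  have h1 : ∑ r : Fin s, gF A f (p r.castSucc) + gF A f (p (Fin.last s))
      = gF A f (p 0) + ∑ r : Fin s, gF A f (p r.succ) := by
    calc ∑ r : Fin s, gF A f (p r.castSucc) + gF A f (p (Fin.last s))
        = ∑ r : Fin (s+1), gF A f (p r) :=
          (Fin.sum_univ_castSucc (f := fun r : Fin (s+1) => gF A f (p r))).symm
      _ = gF A f (p 0) + ∑ r : Fin s, gF A f (p r.succ) :=
          Fin.sum_univ_succ (f := fun r : Fin (s+1) => gF A f (p r))
  have h4 : ∑ r : Fin s, gF A f (p r.castSucc)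
      = gF A f (p 0) + ∑ r : Fin s, gF A f (p r.succ) - gF A f (p (Fin.last s)) := by
    rw [← h1]; abel
  have h2 : (2 : ℝ) • (f (p (Fin.last s)) - f (p 0))
      = f (p (Fin.last s)) - f (p 0) + (f (p (Fin.last s)) - f (p 0)) := two_smul ℝ _
  rw [h2, h4]
  abel


private lemma snoc_zero' {s : ℕ} (p' : Fin (s+1) → Fin n) (j : Fin n) :
    (Fin.snoc p' j : Fin (s+2) → Fin n) 0 = p' 0 := by
  rw [show (0 : Fin (s+2)) = Fin.castSucc 0 from rfl, Fin.snoc_castSucc]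

private lemma psi_bound {q S : ℝ} (hq1 : 1 < q) (hS0 : 0 ≤ S)
    (hS : ∀ x y : X, ‖x + y‖ ^ q + ‖x - y‖ ^ q ≤ 2 * ‖x‖ ^ q + 2 * S ^ q * ‖y‖ ^ q)
    {π : Fin n → ℝ} {A : Matrix (Fin n) (Fin n) ℝ}
    (hπ0 : ∀ i, 0 ≤ π i) (hA0 : ∀ i j, 0 ≤ A i j) (hA1 : ∀ i, ∑ j, A i j = 1)
    (hrev : ∀ i j, π i * A i j = π j * A j i) (f : Fin n → X) (s : ℕ) :
    ∑ p : Fin (s+1) → Fin n, π (p 0) * Wt A s p * ‖Psi A f s p‖ ^ q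
      ≤ (∑ i, π i * ‖gF A f i‖ ^ q)
        + 2 * S ^ q * (s : ℝ) * ∑ k, π k * ∑ j, A k j * ‖dF A f k j‖ ^ q := by
  have hDnn : 0 ≤ ∑ k, π k * ∑ j, A k j * ‖dF A f k j‖ ^ q := by
    refine Finset.sum_nonneg fun k _ => mul_nonneg (hπ0 k) (Finset.sum_nonneg fun j _ =>
      mul_nonneg (hA0 k j) (Real.rpow_nonneg (norm_nonneg _) q))
  induction s with
  | zero =>
      rw [← (Equiv.funUnique (Fin 1) (Fin n)).symm.sum_comp]
      simp only [Nat.cast_zero, mul_zero, zero_mul, add_zero]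
      refine le_of_eq (Finset.sum_congr rfl fun i _ => ?_)
      simp [Wt, Psi]
  | succ s IH =>
      have step1 : ∑ p : Fin (s+2) → Fin n, π (p 0) * Wt A (s+1) p * ‖Psi A f (s+1) p‖ ^ q
          = ∑ p' : Fin (s+1) → Fin n, ∑ i,
              (π (p' 0) * Wt A s p') * (A (p' 0) i * ‖Psi A f s p' + dF A f (p' 0) i‖ ^ q) := by
        rw [sum_cons_decomp, Finset.sum_comm]
        refine Finset.sum_congr rfl fun p' _ => Finset.sum_congr rfl fun i _ => ?_
        rw [show ((Fin.cons i p' : Fin (s+2) → Fin n) 0) = i from rfl, Wt_cons, Psi_cons]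
        have h := hrev i (p' 0)
        linear_combination (Wt A s p' * ‖Psi A f s p' + dF A f (p' 0) i‖ ^ q) * h
      rw [step1]
      have step2 : ∑ p' : Fin (s+1) → Fin n, ∑ i,
            (π (p' 0) * Wt A s p') * (A (p' 0) i * ‖Psi A f s p' + dF A f (p' 0) i‖ ^ q)
          ≤ ∑ p' : Fin (s+1) → Fin n,
              (π (p' 0) * Wt A s p') * (‖Psi A f s p'‖ ^ q
                + 2 * S ^ q * ∑ i, A (p' 0) i * ‖dF A f (p' 0) i‖ ^ q) := by
        refine Finset.sum_le_sum fun p' _ => ?_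
        rw [← Finset.mul_sum]
        exact mul_le_mul_of_nonneg_left
          (core_step hq1 hS hA0 hA1 f (p' 0) (Psi A f s p'))
          (mul_nonneg (hπ0 _) (Wt_nonneg hA0 s p'))
      have step3 : ∑ p' : Fin (s+1) → Fin n,
            (π (p' 0) * Wt A s p') * (‖Psi A f s p'‖ ^ q
              + 2 * S ^ q * ∑ i, A (p' 0) i * ‖dF A f (p' 0) i‖ ^ q)
          = (∑ p' : Fin (s+1) → Fin n, π (p' 0) * Wt A s p' * ‖Psi A f s p'‖ ^ q)
            + 2 * S ^ q * ∑ p' : Fin (s+1) → Fin n, π (p' 0) * Wt A s p'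
                * (∑ i, A (p' 0) i * ‖dF A f (p' 0) i‖ ^ q) := by
        rw [Finset.mul_sum, ← Finset.sum_add_distrib]
        exact Finset.sum_congr rfl fun p' _ => by ring
      have step4 : ∑ p' : Fin (s+1) → Fin n, π (p' 0) * Wt A s p'
            * (∑ i, A (p' 0) i * ‖dF A f (p' 0) i‖ ^ q)
          = ∑ k, π k * ∑ j, A k j * ‖dF A f k j‖ ^ q := by
        have := marg_first (π := π) hA1 s (fun k => ∑ i, A k i * ‖dF A f k i‖ ^ q)
        calc ∑ p' : Fin (s+1) → Fin n, π (p' 0) * Wt A s p'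
              * (∑ i, A (p' 0) i * ‖dF A f (p' 0) i‖ ^ q)
            = ∑ k, π k * (∑ i, A k i * ‖dF A f k i‖ ^ q) := this
          _ = ∑ k, π k * ∑ j, A k j * ‖dF A f k j‖ ^ q := rfl
      calc ∑ p' : Fin (s+1) → Fin n, ∑ i,
            (π (p' 0) * Wt A s p') * (A (p' 0) i * ‖Psi A f s p' + dF A f (p' 0) i‖ ^ q)
          ≤ (∑ p' : Fin (s+1) → Fin n, π (p' 0) * Wt A s p' * ‖Psi A f s p'‖ ^ q)
            + 2 * S ^ q * ∑ k, π k * ∑ j, A k j * ‖dF A f k j‖ ^ q := by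
            rw [← step4]
            exact step2.trans (le_of_eq step3)
        _ ≤ ((∑ i, π i * ‖gF A f i‖ ^ q)
              + 2 * S ^ q * (s : ℝ) * ∑ k, π k * ∑ j, A k j * ‖dF A f k j‖ ^ q)
            + 2 * S ^ q * ∑ k, π k * ∑ j, A k j * ‖dF A f k j‖ ^ q := by
            exact add_le_add IH le_rfl
        _ = (∑ i, π i * ‖gF A f i‖ ^ q)
            + 2 * S ^ q * ((s : ℝ) + 1) * ∑ k, π k * ∑ j, A k j * ‖dF A f k j‖ ^ q := by ring
        _ = (∑ i, π i * ‖gF A f i‖ ^ q)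
            + 2 * S ^ q * ((s + 1 : ℕ) : ℝ) * ∑ k, π k * ∑ j, A k j * ‖dF A f k j‖ ^ q := by
            push_cast; ring

private lemma phi_bound {q S : ℝ} (hq1 : 1 < q) (hS0 : 0 ≤ S)
    (hS : ∀ x y : X, ‖x + y‖ ^ q + ‖x - y‖ ^ q ≤ 2 * ‖x‖ ^ q + 2 * S ^ q * ‖y‖ ^ q)
    {π : Fin n → ℝ} {A : Matrix (Fin n) (Fin n) ℝ}
    (hπ0 : ∀ i, 0 ≤ π i) (hA0 : ∀ i j, 0 ≤ A i j) (hA1 : ∀ i, ∑ j, A i j = 1)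
    (hstat : ∀ j, ∑ i, π i * A i j = π j) (f : Fin n → X) (s : ℕ) :
    ∑ p : Fin (s+1) → Fin n, π (p 0) * Wt A s p * ‖Phi A f s p‖ ^ q
      ≤ (∑ i, π i * ‖gF A f i‖ ^ q)
        + 2 * S ^ q * (s : ℝ) * ∑ k, π k * ∑ j, A k j * ‖dF A f k j‖ ^ q := by
  induction s with
  | zero =>
      rw [← (Equiv.funUnique (Fin 1) (Fin n)).symm.sum_comp]
      simp only [Nat.cast_zero, mul_zero, zero_mul, add_zero]
      refine le_of_eq (Finset.sum_congr rfl fun i _ => ?_)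
      simp [Wt, Phi]
  | succ s IH =>
      have step1 : ∑ p : Fin (s+2) → Fin n, π (p 0) * Wt A (s+1) p * ‖Phi A f (s+1) p‖ ^ q
          = ∑ p' : Fin (s+1) → Fin n, ∑ j,
              (π (p' 0) * Wt A s p')
                * (A (p' (Fin.last s)) j * ‖Phi A f s p' + dF A f (p' (Fin.last s)) j‖ ^ q) := by
        rw [sum_snoc_decomp]
        refine Finset.sum_congr rfl fun p' _ => Finset.sum_congr rfl fun j _ => ?_
        rw [snoc_zero', Wt_snoc, Phi_snoc]
        ring
      rw [step1]
      have step2 : ∑ p' : Fin (s+1) → Fin n, ∑ j,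
            (π (p' 0) * Wt A s p')
              * (A (p' (Fin.last s)) j * ‖Phi A f s p' + dF A f (p' (Fin.last s)) j‖ ^ q)
          ≤ ∑ p' : Fin (s+1) → Fin n,
              (π (p' 0) * Wt A s p') * (‖Phi A f s p'‖ ^ q
                + 2 * S ^ q * ∑ j, A (p' (Fin.last s)) j * ‖dF A f (p' (Fin.last s)) j‖ ^ q) := by
        refine Finset.sum_le_sum fun p' _ => ?_
        rw [← Finset.mul_sum]
        exact mul_le_mul_of_nonneg_left
          (core_step hq1 hS hA0 hA1 f (p' (Fin.last s)) (Phi A f s p'))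
          (mul_nonneg (hπ0 _) (Wt_nonneg hA0 s p'))
      have step3 : ∑ p' : Fin (s+1) → Fin n,
            (π (p' 0) * Wt A s p') * (‖Phi A f s p'‖ ^ q
              + 2 * S ^ q * ∑ j, A (p' (Fin.last s)) j * ‖dF A f (p' (Fin.last s)) j‖ ^ q)
          = (∑ p' : Fin (s+1) → Fin n, π (p' 0) * Wt A s p' * ‖Phi A f s p'‖ ^ q)
            + 2 * S ^ q * ∑ p' : Fin (s+1) → Fin n, π (p' 0) * Wt A s p'
                * (∑ j, A (p' (Fin.last s)) j * ‖dF A f (p' (Fin.last s)) j‖ ^ q) := by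
        rw [Finset.mul_sum, ← Finset.sum_add_distrib]
        exact Finset.sum_congr rfl fun p' _ => by ring
      have step4 : ∑ p' : Fin (s+1) → Fin n, π (p' 0) * Wt A s p'
            * (∑ j, A (p' (Fin.last s)) j * ‖dF A f (p' (Fin.last s)) j‖ ^ q)
          = ∑ k, π k * ∑ j, A k j * ‖dF A f k j‖ ^ q :=
        marg_last (π := π) hstat s (fun k => ∑ j, A k j * ‖dF A f k j‖ ^ q)
      calc ∑ p' : Fin (s+1) → Fin n, ∑ j,
            (π (p' 0) * Wt A s p')
              * (A (p' (Fin.last s)) j * ‖Phi A f s p' + dF A f (p' (Fin.last s)) j‖ ^ q)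
          ≤ (∑ p' : Fin (s+1) → Fin n, π (p' 0) * Wt A s p' * ‖Phi A f s p'‖ ^ q)
            + 2 * S ^ q * ∑ k, π k * ∑ j, A k j * ‖dF A f k j‖ ^ q := by
            rw [← step4]
            exact step2.trans (le_of_eq step3)
        _ ≤ ((∑ i, π i * ‖gF A f i‖ ^ q)
              + 2 * S ^ q * (s : ℝ) * ∑ k, π k * ∑ j, A k j * ‖dF A f k j‖ ^ q)
            + 2 * S ^ q * ∑ k, π k * ∑ j, A k j * ‖dF A f k j‖ ^ q :=
            add_le_add IH le_rfl
        _ = (∑ i, π i * ‖gF A f i‖ ^ q)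
            + 2 * S ^ q * ((s + 1 : ℕ) : ℝ) * ∑ k, π k * ∑ j, A k j * ‖dF A f k j‖ ^ q := by
            push_cast; ring

end
/-- A normed space `X` with finite `q`-smoothness constant `S` (`1 < q ≤ 2`) has
Markov type `q` with constant `M_q(X) ≤ 8 (2^{q+1}-4)^{-1/q} S`: for every
stationary reversible finite Markov chain and every `f : {1,…,n} → X` and `t ≥ 1`,
`E‖f(Z_t) - f(Z_0)‖^q ≤ (2^{3q-2} S^q / (2^{q-1}-1)) · t · E‖f(Z_1) - f(Z_0)‖^q`.
(Note `2^{3q-2}/(2^{q-1}-1) = (8 (2^{q+1}-4)^{-1/q})^q`.) -/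
theorem smooth_space_markov_type
    {X : Type*} [NormedAddCommGroup X] [NormedSpace ℝ X]
    (q : ℝ) (hq1 : 1 < q) (hq2 : q ≤ 2)
    (S : ℝ) (hS0 : 0 ≤ S)
    (hS : ∀ x y : X, ‖x + y‖ ^ q + ‖x - y‖ ^ q ≤ 2 * ‖x‖ ^ q + 2 * S ^ q * ‖y‖ ^ q)
    (n : ℕ) (π : Fin n → ℝ) (A : Matrix (Fin n) (Fin n) ℝ)
    (hπ0 : ∀ i, 0 ≤ π i) (hπ1 : ∑ i, π i = 1)
    (hA0 : ∀ i j, 0 ≤ A i j) (hA1 : ∀ i, ∑ j, A i j = 1)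
    (hstat : ∀ j, ∑ i, π i * A i j = π j)
    (hrev : ∀ i j, π i * A i j = π j * A j i)
    (f : Fin n → X) (t : ℕ) (ht : 1 ≤ t) :
    ∑ i, ∑ j, π i * (A ^ t) i j * ‖f i - f j‖ ^ q ≤
      (2 : ℝ) ^ (3 * q - 2) * S ^ q / (2 ^ (q - 1) - 1) * t *
        ∑ i, ∑ j, π i * A i j * ‖f i - f j‖ ^ q := by
  have hq0 : (0:ℝ) < q := lt_trans one_pos hq1
  have hqne : q ≠ 0 := ne_of_gt hq0
  have hSqnn : 0 ≤ S ^ q := Real.rpow_nonneg hS0 q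
  rcases subsingleton_or_nontrivial X with hX | hX
  · have hz : ∀ i j : Fin n, ‖f i - f j‖ ^ q = 0 := fun i j => by
      rw [Subsingleton.elim (f i) (f j), sub_self, norm_zero, Real.zero_rpow hqne]
    simp only [hz, mul_zero, Finset.sum_const_zero]
    simp
  obtain ⟨x, hx⟩ := exists_ne (0 : X)
  set E1 := ∑ i, ∑ j, π i * A i j * ‖f i - f j‖ ^ q with hE1def
  have hE1nn : 0 ≤ E1 :=
    Finset.sum_nonneg fun i _ => Finset.sum_nonneg fun j _ =>
      mul_nonneg (mul_nonneg (hπ0 i) (hA0 i j)) (Real.rpow_nonneg (norm_nonneg _) q)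
  have hGle : (∑ i, π i * ‖gF A f i‖ ^ q) ≤ E1 := by
    rw [hE1def]
    refine Finset.sum_le_sum fun i _ => ?_
    have hj : ‖gF A f i‖ ^ q ≤ ∑ j, A i j * ‖f j - f i‖ ^ q := by
      rw [gF_eq hA1 f i]
      exact jensen_norm (A i) _ (hA0 i) (hA1 i) hq1.le
    calc π i * ‖gF A f i‖ ^ q ≤ π i * ∑ j, A i j * ‖f j - f i‖ ^ q :=
          mul_le_mul_of_nonneg_left hj (hπ0 i)
      _ = ∑ j, π i * A i j * ‖f i - f j‖ ^ q := by
          rw [Finset.mul_sum]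
          exact Finset.sum_congr rfl fun j _ => by rw [norm_sub_rev]; ring
  have h2q : (2:ℝ) ^ q = 2 * 2 ^ (q-1) := by
    rw [show q = 1 + (q-1) by ring]
    rw [Real.rpow_add (by norm_num : (0:ℝ) < 2), Real.rpow_one]
    ring_nf
  have hDle : (∑ k, π k * ∑ j, A k j * ‖dF A f k j‖ ^ q) ≤ 2 ^ q * E1 := by
    have hk : ∀ k, ∑ j, A k j * ‖dF A f k j‖ ^ q
        ≤ 2 ^ q * ∑ j, A k j * ‖f j - f k‖ ^ q := by
      intro k
      have hgk : ‖gF A f k‖ ^ q ≤ ∑ j, A k j * ‖f j - f k‖ ^ q := by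
        rw [gF_eq hA1 f k]
        exact jensen_norm _ _ (hA0 k) (hA1 k) hq1.le
      have h1 : ∀ j, ‖dF A f k j‖ ^ q
          ≤ 2 ^ (q-1) * (‖f j - f k‖ ^ q + ‖gF A f k‖ ^ q) := by
        intro j
        calc ‖dF A f k j‖ ^ q ≤ (‖f j - f k‖ + ‖gF A f k‖) ^ q :=
              Real.rpow_le_rpow (norm_nonneg _) (norm_sub_le _ _) hq0.le
          _ ≤ 2 ^ (q-1) * (‖f j - f k‖ ^ q + ‖gF A f k‖ ^ q) :=
              two_point hq1.le (norm_nonneg _) (norm_nonneg _)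
      calc ∑ j, A k j * ‖dF A f k j‖ ^ q
          ≤ ∑ j, A k j * (2 ^ (q-1) * (‖f j - f k‖ ^ q + ‖gF A f k‖ ^ q)) :=
            Finset.sum_le_sum fun j _ => mul_le_mul_of_nonneg_left (h1 j) (hA0 k j)
        _ = 2 ^ (q-1) * (∑ j, A k j * ‖f j - f k‖ ^ q) + 2 ^ (q-1) * ‖gF A f k‖ ^ q := by
            rw [Finset.sum_congr rfl fun j _ => (by ring :
              A k j * (2 ^ (q-1) * (‖f j - f k‖ ^ q + ‖gF A f k‖ ^ q))
                = 2 ^ (q-1) * (A k j * ‖f j - f k‖ ^ q)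
                  + (2 ^ (q-1) * ‖gF A f k‖ ^ q) * A k j)]
            rw [Finset.sum_add_distrib, ← Finset.mul_sum, ← Finset.mul_sum, hA1 k, mul_one]
        _ ≤ 2 ^ (q-1) * (∑ j, A k j * ‖f j - f k‖ ^ q)
              + 2 ^ (q-1) * ∑ j, A k j * ‖f j - f k‖ ^ q := by
            have h2 : (0:ℝ) ≤ 2 ^ (q-1) := Real.rpow_nonneg (by norm_num) _
            have := mul_le_mul_of_nonneg_left hgk h2
            linarith
        _ = 2 ^ q * ∑ j, A k j * ‖f j - f k‖ ^ q := by rw [h2q]; ring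
    calc ∑ k, π k * ∑ j, A k j * ‖dF A f k j‖ ^ q
        ≤ ∑ k, π k * (2 ^ q * ∑ j, A k j * ‖f j - f k‖ ^ q) :=
          Finset.sum_le_sum fun k _ => mul_le_mul_of_nonneg_left (hk k) (hπ0 k)
      _ = 2 ^ q * E1 := by
          rw [hE1def, Finset.mul_sum]
          refine Finset.sum_congr rfl fun k _ => ?_
          rw [Finset.mul_sum, Finset.mul_sum, Finset.mul_sum]
          refine Finset.sum_congr rfl fun j _ => ?_
          rw [norm_sub_rev]; ring
  have hpath : (∑ i, ∑ j, π i * (A ^ t) i j * ‖f i - f j‖ ^ q)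
      = ∑ p : Fin (t+1) → Fin n, π (p 0) * Wt A t p * ‖f (p 0) - f (p (Fin.last t))‖ ^ q :=
    (marg A t π (fun i j => ‖f i - f j‖ ^ q)).symm
  have hpoint : ∀ p : Fin (t+1) → Fin n,
      2 ^ q * ‖f (p 0) - f (p (Fin.last t))‖ ^ q
        ≤ 2 ^ (q-1) * (‖Phi A f t p‖ ^ q + ‖Psi A f t p‖ ^ q) := by
    intro p
    have hd : ‖Phi A f t p - Psi A f t p‖ = 2 * ‖f (p 0) - f (p (Fin.last t))‖ := by
      rw [Phi_sub_Psi, norm_smul, Real.norm_eq_abs,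
        abs_of_nonneg (by norm_num : (0:ℝ) ≤ 2), norm_sub_rev]
    have e1 : 2 ^ q * ‖f (p 0) - f (p (Fin.last t))‖ ^ q
        = ‖Phi A f t p - Psi A f t p‖ ^ q := by
      rw [hd, Real.mul_rpow (by norm_num) (norm_nonneg _)]
    rw [e1]
    calc ‖Phi A f t p - Psi A f t p‖ ^ q ≤ (‖Phi A f t p‖ + ‖Psi A f t p‖) ^ q :=
          Real.rpow_le_rpow (norm_nonneg _) (norm_sub_le _ _) hq0.le
      _ ≤ 2 ^ (q-1) * (‖Phi A f t p‖ ^ q + ‖Psi A f t p‖ ^ q) :=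
          two_point hq1.le (norm_nonneg _) (norm_nonneg _)
  have h2qpos : (0:ℝ) < 2 ^ q := Real.rpow_pos_of_pos (by norm_num) q
  have hmain : 2 ^ q * (∑ i, ∑ j, π i * (A ^ t) i j * ‖f i - f j‖ ^ q)
      ≤ 2 ^ q * ((∑ i, π i * ‖gF A f i‖ ^ q)
          + 2 * S ^ q * (t:ℝ) * ∑ k, π k * ∑ j, A k j * ‖dF A f k j‖ ^ q) := by
    rw [hpath]
    calc 2 ^ q * ∑ p : Fin (t+1) → Fin n,
          π (p 0) * Wt A t p * ‖f (p 0) - f (p (Fin.last t))‖ ^ q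
        = ∑ p : Fin (t+1) → Fin n, (π (p 0) * Wt A t p)
            * (2 ^ q * ‖f (p 0) - f (p (Fin.last t))‖ ^ q) := by
          rw [Finset.mul_sum]
          exact Finset.sum_congr rfl fun p _ => by ring
      _ ≤ ∑ p : Fin (t+1) → Fin n, (π (p 0) * Wt A t p)
            * (2 ^ (q-1) * (‖Phi A f t p‖ ^ q + ‖Psi A f t p‖ ^ q)) :=
          Finset.sum_le_sum fun p _ => mul_le_mul_of_nonneg_left (hpoint p)
            (mul_nonneg (hπ0 _) (Wt_nonneg hA0 t p))
      _ = 2 ^ (q-1) * ((∑ p : Fin (t+1) → Fin n, π (p 0) * Wt A t p * ‖Phi A f t p‖ ^ q)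
            + ∑ p : Fin (t+1) → Fin n, π (p 0) * Wt A t p * ‖Psi A f t p‖ ^ q) := by
          rw [Finset.sum_congr rfl fun p _ => (by ring :
            (π (p 0) * Wt A t p) * (2 ^ (q-1) * (‖Phi A f t p‖ ^ q + ‖Psi A f t p‖ ^ q))
              = 2 ^ (q-1) * (π (p 0) * Wt A t p * ‖Phi A f t p‖ ^ q)
                + 2 ^ (q-1) * (π (p 0) * Wt A t p * ‖Psi A f t p‖ ^ q))]
          rw [Finset.sum_add_distrib, ← Finset.mul_sum, ← Finset.mul_sum]
          ring
      _ ≤ 2 ^ (q-1) * (((∑ i, π i * ‖gF A f i‖ ^ q)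
            + 2 * S ^ q * (t:ℝ) * ∑ k, π k * ∑ j, A k j * ‖dF A f k j‖ ^ q)
          + ((∑ i, π i * ‖gF A f i‖ ^ q)
            + 2 * S ^ q * (t:ℝ) * ∑ k, π k * ∑ j, A k j * ‖dF A f k j‖ ^ q)) := by
          refine mul_le_mul_of_nonneg_left ?_ (Real.rpow_nonneg (by norm_num) _)
          exact add_le_add (phi_bound hq1 hS0 hS hπ0 hA0 hA1 hstat f t)
            (psi_bound hq1 hS0 hS hπ0 hA0 hA1 hrev f t)
      _ = 2 ^ q * ((∑ i, π i * ‖gF A f i‖ ^ q)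
            + 2 * S ^ q * (t:ℝ) * ∑ k, π k * ∑ j, A k j * ‖dF A f k j‖ ^ q) := by
          rw [h2q]; ring
  have hLE : (∑ i, ∑ j, π i * (A ^ t) i j * ‖f i - f j‖ ^ q)
      ≤ (∑ i, π i * ‖gF A f i‖ ^ q)
        + 2 * S ^ q * (t:ℝ) * ∑ k, π k * ∑ j, A k j * ‖dF A f k j‖ ^ q :=
    le_of_mul_le_mul_left hmain h2qpos
  have hq1e : (2:ℝ) ^ (q+1) = 2 ^ q * 2 := by
    rw [Real.rpow_add (by norm_num : (0:ℝ) < 2), Real.rpow_one]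
  have hcomb : (∑ i, ∑ j, π i * (A ^ t) i j * ‖f i - f j‖ ^ q)
      ≤ E1 + 2 ^ (q+1) * S ^ q * (t:ℝ) * E1 := by
    have htn : (0:ℝ) ≤ 2 * S ^ q * (t:ℝ) :=
      mul_nonneg (mul_nonneg (by norm_num) hSqnn) (Nat.cast_nonneg t)
    have h2 : 2 * S ^ q * (t:ℝ) * (∑ k, π k * ∑ j, A k j * ‖dF A f k j‖ ^ q)
        ≤ 2 * S ^ q * (t:ℝ) * (2 ^ q * E1) := mul_le_mul_of_nonneg_left hDle htn
    calc (∑ i, ∑ j, π i * (A ^ t) i j * ‖f i - f j‖ ^ q)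
        ≤ (∑ i, π i * ‖gF A f i‖ ^ q)
          + 2 * S ^ q * (t:ℝ) * ∑ k, π k * ∑ j, A k j * ‖dF A f k j‖ ^ q := hLE
      _ ≤ E1 + 2 * S ^ q * (t:ℝ) * (2 ^ q * E1) := add_le_add hGle h2
      _ = E1 + 2 ^ (q+1) * S ^ q * (t:ℝ) * E1 := by rw [hq1e]; ring
  have ht1 : (1:ℝ) ≤ (t:ℝ) := by exact_mod_cast ht
  have hKt : E1 + 2 ^ (q+1) * S ^ q * (t:ℝ) * E1
      ≤ (1 + 2 ^ (q+1) * S ^ q) * (t:ℝ) * E1 := by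
    have hE1t : E1 ≤ (t:ℝ) * E1 := le_mul_of_one_le_left hE1nn ht1
    nlinarith [hE1t]
  -- coefficient comparison
  have hxq : 0 < ‖x‖ ^ q := Real.rpow_pos_of_pos (norm_pos_iff.2 hx) q
  have hs := hS x x
  have h2x : ‖x + x‖ ^ q = 2 ^ q * ‖x‖ ^ q := by
    rw [show x + x = (2:ℝ) • x from (two_smul ℝ x).symm, norm_smul, Real.norm_eq_abs,
      abs_of_nonneg (by norm_num : (0:ℝ) ≤ 2), Real.mul_rpow (by norm_num) (norm_nonneg _)]
  have h0x : ‖x - x‖ ^ q = 0 := by rw [sub_self, norm_zero, Real.zero_rpow hqne]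
  rw [h2x, h0x] at hs
  have hSq : 2 ^ (q-1) - 1 ≤ S ^ q := by
    have h5 : (2 * 2 ^ (q-1)) * ‖x‖ ^ q ≤ (2 + 2 * S ^ q) * ‖x‖ ^ q := by
      rw [← h2q]; linarith
    have h6 := (mul_le_mul_iff_of_pos_right hxq).1 h5
    linarith
  have hu1 : 1 < (2:ℝ) ^ (q-1) := by
    have := Real.one_lt_rpow_iff_of_pos (x := (2:ℝ)) (by norm_num) (y := q - 1)
    rw [this]
    exact Or.inl ⟨by norm_num, by linarith⟩
  have h3q : (2:ℝ) ^ (3*q-2) = 2 * (2 ^ (q-1)) ^ (3:ℕ) := by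
    rw [show 3*q-2 = (q-1)*3+1 by ring, Real.rpow_add (by norm_num : (0:ℝ) < 2),
      Real.rpow_one, Real.rpow_mul (by norm_num : (0:ℝ) ≤ 2)]
    rw [show (3:ℝ) = ((3:ℕ):ℝ) by norm_num, Real.rpow_natCast]
    ring
  have hq1e4 : (2:ℝ) ^ (q+1) = 4 * 2 ^ (q-1) := by
    rw [hq1e, h2q]; ring
  have hKC : 1 + 2 ^ (q+1) * S ^ q ≤ 2 ^ (3*q-2) * S ^ q / (2 ^ (q-1) - 1) := by
    rw [le_div_iff₀ (by linarith : (0:ℝ) < 2 ^ (q-1) - 1), h3q, hq1e4]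
    nlinarith [hSq, hu1, hSqnn, sq_nonneg ((2:ℝ) ^ (q-1) - 1),
      mul_nonneg (sub_nonneg.2 hSq) (sub_nonneg.2 hu1.le)]
  calc ∑ i, ∑ j, π i * (A ^ t) i j * ‖f i - f j‖ ^ q
      ≤ (1 + 2 ^ (q+1) * S ^ q) * (t:ℝ) * E1 := hcomb.trans hKt
    _ ≤ 2 ^ (3*q-2) * S ^ q / (2 ^ (q-1) - 1) * (t:ℝ) * E1 :=
        mul_le_mul_of_nonneg_right
          (mul_le_mul_of_nonneg_right hKC (Nat.cast_nonneg t)) hE1nn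
end

section
/- Let {Z_t} be a stationary reversible finite Markov chain on {1,...,n} and f: {1,...,n} → ℝ. Then for every t > 0, E[max_{0 ≤ s ≤ t} (f(Z_s) - f(Z_0))²] ≤ 100 t E[(f(Z_1) - f(Z_0))²]. -/
/-!
Write `f(Z_s) - f(Z_0) = M_s + ∑_{u<s} (Af - f)(Z_u)` with `M` a martingale. By reversibility the
reversed path `Z_{t-·}` is again the chain; if `N` is its martingale part, adding the two
decompositions cancels the drift sums up to boundary terms:
`2 (f(Z_s) - f(Z_0)) = M_s - N_t + N_{t-s} - (Af - f)(Z_s) + (Af - f)(Z_0)`.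
Doob's `L²` inequality bounds `E max_s M_s²` and `E max_s N_s²` by `4 t E(f(Z_1) - f(Z_0))²`, and
the drift terms are controlled by Jensen's inequality. Doob's inequality is itself proved pathwise:
with `X_s = max_{u ≤ s} |M_u|`, `X_m² + 4 ∑_{s<m} X_s (|M_{s+1}| - |M_s|) ≤ 4 M_m²`, and every
summand has nonnegative expectation because `|M|` is a submartingale.
-/
open Finset Matrix

namespace MarkovChain

variable {α : Type*}

/-- Paths of every length are read as functions on `ℕ`, frozen after their last time. -/
def extendPath {m : ℕ} (z : Fin (m + 1) → α) (u : ℕ) : α :=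
  z (Fin.clamp u m)

lemma extendPath_of_le {m u : ℕ} (z : Fin (m + 1) → α) (hu : u ≤ m) :
    extendPath z u = z ⟨u, Nat.lt_succ_of_le hu⟩ := by
  simp only [extendPath, Fin.clamp, min_eq_left hu]

lemma extendPath_val {m : ℕ} (z : Fin (m + 1) → α) (s : Fin (m + 1)) :
    extendPath z s = z s :=
  extendPath_of_le z (Nat.le_of_lt_succ s.is_lt)

lemma extendPath_zero {m : ℕ} (z : Fin (m + 1) → α) : extendPath z 0 = z 0 :=
  extendPath_of_le z (Nat.zero_le m)

lemma extendPath_snoc_of_le {m u : ℕ} (y : Fin (m + 1) → α) (k : α) (hu : u ≤ m) :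
    extendPath (Fin.snoc y k : Fin (m + 2) → α) u = extendPath y u := by
  rw [extendPath_of_le _ (by omega), extendPath_of_le _ hu]
  exact Fin.snoc_castSucc (α := fun _ => α) (i := ⟨u, Nat.lt_succ_of_le hu⟩) ..

lemma extendPath_snoc_of_lt {m u : ℕ} (y : Fin (m + 1) → α) (k : α) (hu : m < u) :
    extendPath (Fin.snoc y k : Fin (m + 2) → α) u = k := by
  have : Fin.clamp u (m + 1) = Fin.last (m + 1) := Fin.ext (min_eq_right hu)
  simp [extendPath, this]

lemma extendPath_comp_rev {m : ℕ} (z : Fin (m + 1) → α) (v : ℕ) :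
    extendPath (fun u => z u.rev) v = extendPath z (m - v) := by
  simp only [extendPath]
  congr 1
  ext
  simp [Fin.clamp, Fin.val_rev]
  omega

lemma sum_pi_eq_sum_sum_snoc {M : Type*} [AddCommMonoid M] [Fintype α] {m : ℕ}
    (F : (Fin (m + 2) → α) → M) :
    ∑ z, F z = ∑ y : Fin (m + 1) → α, ∑ k, F (Fin.snoc y k) := by
  rw [← (Fin.snocEquiv fun _ => α).sum_comp, Fintype.sum_prod_type, sum_comm]
  rfl

variable (π : α → ℝ) (A : Matrix α α ℝ)

def pathWeight (m : ℕ) (w : ℕ → α) : ℝ :=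
  π (w 0) * ∏ u ∈ range m, A (w u) (w (u + 1))

lemma pathWeight_nonneg (hπ0 : ∀ i, 0 ≤ π i) (hA0 : ∀ i j, 0 ≤ A i j) (m : ℕ) (w : ℕ → α) :
    0 ≤ pathWeight π A m w :=
  mul_nonneg (hπ0 _) (prod_nonneg fun _ _ => hA0 _ _)

lemma pathWeight_succ (m : ℕ) (w : ℕ → α) :
    pathWeight π A (m + 1) w = pathWeight π A m w * A (w m) (w (m + 1)) := by
  rw [pathWeight, pathWeight, prod_range_succ, mul_assoc]

lemma dependsOn_pathWeight (m : ℕ) : DependsOn (pathWeight π A m) (Set.Iic m) := by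
  intro w w' h
  simp only [Set.mem_Iic] at h
  unfold pathWeight
  rw [h 0 (Nat.zero_le m)]
  congr 1
  refine prod_congr rfl fun u hu => ?_
  rw [mem_range] at hu
  rw [h u hu.le, h (u + 1) hu]

lemma pathWeight_extendPath {m : ℕ} (z : Fin (m + 1) → α) :
    pathWeight π A m (extendPath z) = π (z 0) * ∏ s : Fin m, A (z s.castSucc) (z s.succ) := by
  rw [pathWeight, ← Fin.prod_univ_eq_prod_range]
  congr 1
  exact prod_congr rfl fun s _ => by
    rw [← extendPath_val z s.castSucc, ← extendPath_val z s.succ]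
    rfl

/-- Detailed balance, transported along a path. -/
lemma pathWeight_eq_mul_prod_swap (hrev : ∀ i j, π i * A i j = π j * A j i) (m : ℕ)
    (w : ℕ → α) : pathWeight π A m w = π (w m) * ∏ u ∈ range m, A (w (u + 1)) (w u) := by
  induction m with
  | zero => simp [pathWeight]
  | succ m ih =>
    rw [pathWeight_succ, ih, prod_range_succ]
    linear_combination (∏ u ∈ range m, A (w (u + 1)) (w u)) * hrev (w m) (w (m + 1))

lemma pathWeight_reverse (hrev : ∀ i j, π i * A i j = π j * A j i) (m : ℕ) (w : ℕ → α) :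
    pathWeight π A m (fun u => w (m - u)) = pathWeight π A m w := by
  rw [pathWeight_eq_mul_prod_swap π A hrev m w, pathWeight, Nat.sub_zero,
    ← prod_range_reflect (fun u => A (w (u + 1)) (w u))]
  refine congrArg _ (prod_congr rfl fun u hu => ?_)
  rw [mem_range] at hu
  congr 2 <;> omega

variable [Fintype α]

/-- `pathExpect π A m h` is `E[h(Z)]` for the chain `Z` started from `π` and frozen after
time `m`. -/
def pathExpect (m : ℕ) (h : (ℕ → α) → ℝ) : ℝ :=
  ∑ z : Fin (m + 1) → α, pathWeight π A m (extendPath z) * h (extendPath z)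

lemma pathExpect_add (m : ℕ) (h₁ h₂ : (ℕ → α) → ℝ) :
    pathExpect π A m (fun w => h₁ w + h₂ w) = pathExpect π A m h₁ + pathExpect π A m h₂ := by
  simp only [pathExpect, mul_add, sum_add_distrib]

lemma pathExpect_const_mul (m : ℕ) (c : ℝ) (h : (ℕ → α) → ℝ) :
    pathExpect π A m (fun w => c * h w) = c * pathExpect π A m h := by
  simp only [pathExpect, mul_sum, mul_left_comm c]

lemma pathExpect_sum {ι : Type*} (m : ℕ) (s : Finset ι) (h : ι → (ℕ → α) → ℝ) :
    pathExpect π A m (fun w => ∑ i ∈ s, h i w) = ∑ i ∈ s, pathExpect π A m (h i) := by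
  simp only [pathExpect, mul_sum]
  exact sum_comm

lemma pathExpect_mono (hπ0 : ∀ i, 0 ≤ π i) (hA0 : ∀ i j, 0 ≤ A i j) (m : ℕ)
    {h₁ h₂ : (ℕ → α) → ℝ} (h : ∀ w, h₁ w ≤ h₂ w) : pathExpect π A m h₁ ≤ pathExpect π A m h₂ :=
  sum_le_sum fun _ _ => mul_le_mul_of_nonneg_left (h _) (pathWeight_nonneg π A hπ0 hA0 m _)

/-- The Markov property at the last step. -/
lemma pathExpect_succ (m : ℕ) (h : (ℕ → α) → ℝ) :
    pathExpect π A (m + 1) h = ∑ y : Fin (m + 1) → α, pathWeight π A m (extendPath y) *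
      ∑ k, A (extendPath y m) k * h (extendPath (Fin.snoc y k : Fin (m + 2) → α)) := by
  rw [pathExpect, sum_pi_eq_sum_sum_snoc]
  refine sum_congr rfl fun y _ => ?_
  rw [mul_sum]
  refine sum_congr rfl fun k _ => ?_
  rw [pathWeight_succ, dependsOn_pathWeight π A m fun u hu => extendPath_snoc_of_le y k hu,
    extendPath_snoc_of_le y k le_rfl, extendPath_snoc_of_lt y k (Nat.lt_succ_self m)]
  ring

lemma pathExpect_of_dependsOn (hA1 : ∀ i, ∑ j, A i j = 1) {h : (ℕ → α) → ℝ} {r m : ℕ}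
    (hh : DependsOn h (Set.Iic r)) (hrm : r ≤ m) : pathExpect π A m h = pathExpect π A r h := by
  induction m, hrm using Nat.le_induction with
  | base => rfl
  | succ m hrm ih =>
    rw [← ih, pathExpect_succ]
    refine sum_congr rfl fun y _ => ?_
    have hk : ∀ k, h (extendPath (Fin.snoc y k : Fin (m + 2) → α)) = h (extendPath y) :=
      fun k => hh fun u hu => extendPath_snoc_of_le y k (le_trans hu hrm)
    simp only [hk, ← sum_mul, hA1, one_mul]

lemma pathExpect_comp_eval (hA1 : ∀ i, ∑ j, A i j = 1) (hstat : ∀ j, ∑ i, π i * A i j = π j)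
    (ψ : α → ℝ) {u m : ℕ} (hu : u ≤ m) :
    pathExpect π A m (fun w => ψ (w u)) = ∑ i, π i * ψ i := by
  suffices key : ∀ u (ψ : α → ℝ), pathExpect π A u (fun w => ψ (w u)) = ∑ i, π i * ψ i by
    rw [pathExpect_of_dependsOn π A hA1 (fun w w' h => by rw [h u (le_refl u)]) hu, key]
  intro u
  induction u with
  | zero =>
    intro ψ
    rw [pathExpect, ← (Equiv.funUnique (Fin 1) α).symm.sum_comp]
    simp [pathWeight, extendPath]
  | succ u ih =>
    intro ψ
    rw [pathExpect_succ]
    simp only [extendPath_snoc_of_lt _ _ (Nat.lt_succ_self u)]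
    change pathExpect π A u (fun w => ∑ k, A (w u) k * ψ k) = _
    rw [ih fun i => ∑ k, A i k * ψ k]
    simp only [mul_sum, ← mul_assoc]
    rw [sum_comm]
    simp only [← sum_mul, hstat]

lemma pathExpect_comp_reverse (hrev : ∀ i j, π i * A i j = π j * A j i) (m : ℕ)
    (h : (ℕ → α) → ℝ) :
    pathExpect π A m (fun w => h fun u => w (m - u)) = pathExpect π A m h := by
  have hinv : Function.Involutive fun (z : Fin (m + 1) → α) u => z u.rev :=
    fun z => funext fun u => by simp
  refine Fintype.sum_equiv hinv.toPerm _ _ fun z => ?_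
  have hz : (fun u => extendPath z (m - u)) = extendPath fun u => z u.rev :=
    funext fun v => (extendPath_comp_rev z v).symm
  rw [Function.Involutive.coe_toPerm, ← hz, pathWeight_reverse π A hrev]

variable (f : α → ℝ)

lemma sum_mul_sq_sub_eq {i : α} (hi : ∑ j, A i j = 1) (v : α → ℝ) (c : ℝ) :
    ∑ j, A i j * (v j - c) ^ 2 = ∑ j, A i j * (v j - (A *ᵥ v) i) ^ 2 + ((A *ᵥ v) i - c) ^ 2 := by
  set μ := (A *ᵥ v) i
  have h : ∀ j, A i j * (v j - c) ^ 2 =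
      A i j * (v j - μ) ^ 2 + 2 * (μ - c) * (A i j * v j) - (μ ^ 2 - c ^ 2) * A i j :=
    fun j => by ring
  simp only [h, sum_sub_distrib, sum_add_distrib, ← mul_sum, hi]
  rw [show ∑ j, A i j * v j = μ from rfl]
  ring

lemma sq_mulVec_sub_le (hA0 : ∀ i j, 0 ≤ A i j) {i : α} (hi : ∑ j, A i j = 1) :
    (A *ᵥ f - f) i ^ 2 ≤ ∑ j, A i j * (f j - f i) ^ 2 := by
  rw [sum_mul_sq_sub_eq A hi f (f i), Pi.sub_apply, le_add_iff_nonneg_left]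
  exact sum_nonneg fun j _ => mul_nonneg (hA0 i j) (sq_nonneg _)

lemma sum_mul_sq_sub_mulVec_le {i : α} (hi : ∑ j, A i j = 1) :
    ∑ j, A i j * (f j - (A *ᵥ f) i) ^ 2 ≤ ∑ j, A i j * (f j - f i) ^ 2 := by
  rw [sum_mul_sq_sub_eq A hi f (f i)]
  exact le_add_of_nonneg_right (sq_nonneg _)

lemma abs_le_sum_mul_abs_add_sub_mulVec (hA0 : ∀ i j, 0 ≤ A i j) {i : α} (hi : ∑ j, A i j = 1)
    (a : ℝ) : |a| ≤ ∑ k, A i k * |a + (f k - (A *ᵥ f) i)| := by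
  have ha : ∑ k, A i k * (a + (f k - (A *ᵥ f) i)) = a := by
    simp only [mul_add, mul_sub, sum_add_distrib, sum_sub_distrib, ← sum_mul, hi]
    rw [show ∑ k, A i k * f k = (A *ᵥ f) i from rfl]
    ring
  calc |a| = |∑ k, A i k * (a + (f k - (A *ᵥ f) i))| := by rw [ha]
    _ ≤ ∑ k, |A i k * (a + (f k - (A *ᵥ f) i))| := abs_sum_le_sum_abs _ _
    _ = ∑ k, A i k * |a + (f k - (A *ᵥ f) i)| := by simp only [abs_mul, abs_of_nonneg (hA0 _ _)]

lemma sum_mul_sq_add_sub_mulVec {i : α} (hi : ∑ j, A i j = 1) (a : ℝ) :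
    ∑ k, A i k * (a + (f k - (A *ᵥ f) i)) ^ 2 = a ^ 2 + ∑ k, A i k * (f k - (A *ᵥ f) i) ^ 2 := by
  calc ∑ k, A i k * (a + (f k - (A *ᵥ f) i)) ^ 2 = ∑ k, A i k * (f k - ((A *ᵥ f) i - a)) ^ 2 :=
        sum_congr rfl fun k _ => by ring
    _ = _ := by rw [sum_mul_sq_sub_eq A hi f]; ring

/-- `E[(f(Z_1) - f(Z_0))²]` for the chain started from `π`. -/
def meanSqIncrement : ℝ := ∑ i, ∑ j, π i * A i j * (f j - f i) ^ 2

lemma meanSqIncrement_nonneg (hπ0 : ∀ i, 0 ≤ π i) (hA0 : ∀ i j, 0 ≤ A i j) :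
    0 ≤ meanSqIncrement π A f :=
  sum_nonneg fun i _ => sum_nonneg fun j _ =>
    mul_nonneg (mul_nonneg (hπ0 i) (hA0 i j)) (sq_nonneg _)

lemma sum_mul_le_meanSqIncrement (hπ0 : ∀ i, 0 ≤ π i) {ψ : α → ℝ}
    (hψ : ∀ i, ψ i ≤ ∑ j, A i j * (f j - f i) ^ 2) : ∑ i, π i * ψ i ≤ meanSqIncrement π A f :=
  sum_le_sum fun i _ => by
    simpa only [mul_sum, mul_assoc] using mul_le_mul_of_nonneg_left (hψ i) (hπ0 i)

def martingalePart (w : ℕ → α) (s : ℕ) : ℝ :=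
  f (w s) - f (w 0) - ∑ u ∈ range s, (A *ᵥ f - f) (w u)

def martingaleMax (t : ℕ) (w : ℕ → α) : ℝ :=
  partialSups (fun s => |martingalePart A f w s|) t

lemma dependsOn_martingalePart (s : ℕ) :
    DependsOn (fun w => martingalePart A f w s) (Set.Iic s) := by
  intro w w' h
  simp only [Set.mem_Iic] at h
  simp only [martingalePart, h s le_rfl, h 0 (Nat.zero_le s)]
  congr 1
  exact sum_congr rfl fun u hu => by rw [h u (mem_range.1 hu).le]

lemma dependsOn_martingaleMax (t : ℕ) : DependsOn (martingaleMax A f t) (Set.Iic t) := by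
  intro w w' h
  simp only [martingaleMax, partialSups_eq_sup'_range]
  refine sup'_congr _ rfl fun s hs => ?_
  exact congrArg abs (dependsOn_martingalePart A f s fun u hu =>
    h u (le_trans hu (Nat.lt_succ_iff.1 (mem_range.1 hs))))

lemma martingaleMax_nonneg (t : ℕ) (w : ℕ → α) : 0 ≤ martingaleMax A f t w :=
  (abs_nonneg _).trans (le_partialSups_of_le (fun s => |martingalePart A f w s|) (Nat.zero_le t))

lemma sq_martingalePart_le_sq_martingaleMax (w : ℕ → α) {s t : ℕ} (hs : s ≤ t) :
    martingalePart A f w s ^ 2 ≤ martingaleMax A f t w ^ 2 := by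
  rw [← sq_abs]
  exact pow_le_pow_left₀ (abs_nonneg _)
    (le_partialSups_of_le (fun s => |martingalePart A f w s|) hs) 2

lemma martingalePart_extendPath_snoc {m : ℕ} (y : Fin (m + 1) → α) (k : α) :
    martingalePart A f (extendPath (Fin.snoc y k : Fin (m + 2) → α)) (m + 1) =
      martingalePart A f (extendPath y) m + (f k - (A *ᵥ f) (extendPath y m)) := by
  have hpast : ∀ u ∈ range (m + 1), (A *ᵥ f - f) (extendPath (Fin.snoc y k : Fin (m + 2) → α) u)
      = (A *ᵥ f - f) (extendPath y u) :=
    fun u hu => by rw [extendPath_snoc_of_le y k (Nat.lt_succ_iff.1 (mem_range.1 hu))]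
  rw [martingalePart, martingalePart, sum_congr rfl hpast, sum_range_succ,
    extendPath_snoc_of_lt y k (Nat.lt_succ_self m), extendPath_snoc_of_le y k (Nat.zero_le m),
    Pi.sub_apply]
  ring

lemma pathExpect_sq_drift_le (hπ0 : ∀ i, 0 ≤ π i) (hA0 : ∀ i j, 0 ≤ A i j)
    (hA1 : ∀ i, ∑ j, A i j = 1) (hstat : ∀ j, ∑ i, π i * A i j = π j) {u m : ℕ} (hu : u ≤ m) :
    pathExpect π A m (fun w => (A *ᵥ f - f) (w u) ^ 2) ≤ meanSqIncrement π A f := by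
  rw [pathExpect_comp_eval π A hA1 hstat (fun i => (A *ᵥ f - f) i ^ 2) hu]
  exact sum_mul_le_meanSqIncrement π A f hπ0 fun i => sq_mulVec_sub_le A f hA0 (hA1 i)

lemma pathExpect_sq_martingalePart_le (hπ0 : ∀ i, 0 ≤ π i) (hA1 : ∀ i, ∑ j, A i j = 1) (hstat : ∀ j, ∑ i, π i * A i j = π j) (m : ℕ) :
    pathExpect π A m (fun w => martingalePart A f w m ^ 2) ≤ m * meanSqIncrement π A f := by
  induction m with
  | zero => simp [martingalePart, pathExpect]
  | succ m ih =>
    have hstep : pathExpect π A (m + 1) (fun w => martingalePart A f w (m + 1) ^ 2) =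
        pathExpect π A m (fun w => martingalePart A f w m ^ 2) +
          pathExpect π A m (fun w => ∑ k, A (w m) k * (f k - (A *ᵥ f) (w m)) ^ 2) := by
      rw [pathExpect_succ, ← pathExpect_add]
      refine sum_congr rfl fun y _ => ?_
      simp only [martingalePart_extendPath_snoc, sum_mul_sq_add_sub_mulVec A f (hA1 _)]
    have hvar : pathExpect π A m (fun w => ∑ k, A (w m) k * (f k - (A *ᵥ f) (w m)) ^ 2) ≤
        meanSqIncrement π A f := by
      rw [pathExpect_comp_eval π A hA1 hstat (fun i => ∑ k, A i k * (f k - (A *ᵥ f) i) ^ 2) le_rfl]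
      exact sum_mul_le_meanSqIncrement π A f hπ0 fun i => sum_mul_sq_sub_mulVec_le A f (hA1 i)
    rw [hstep]
    push_cast
    linarith

lemma pathExpect_mul_abs_martingalePart_succ_sub_nonneg (hπ0 : ∀ i, 0 ≤ π i)
    (hA0 : ∀ i j, 0 ≤ A i j) (hA1 : ∀ i, ∑ j, A i j = 1) {G : (ℕ → α) → ℝ} {s m : ℕ}
    (hG : DependsOn G (Set.Iic s)) (hG0 : ∀ w, 0 ≤ G w) (hsm : s < m) :
    0 ≤ pathExpect π A m
      (fun w => G w * (|martingalePart A f w (s + 1)| - |martingalePart A f w s|)) := by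
  have hdep : DependsOn (fun w => G w *
      (|martingalePart A f w (s + 1)| - |martingalePart A f w s|)) (Set.Iic (s + 1)) := by
    intro w w' h
    have h' : ∀ u ∈ Set.Iic s, w u = w' u := fun u hu => h u (Nat.le_succ_of_le hu)
    simp only [hG h', dependsOn_martingalePart A f s h', dependsOn_martingalePart A f (s + 1) h]
  rw [pathExpect_of_dependsOn π A hA1 hdep hsm, pathExpect_succ]
  refine sum_nonneg fun y _ => mul_nonneg (pathWeight_nonneg π A hπ0 hA0 s _) ?_
  have hpast : ∀ k, ∀ u ∈ Set.Iic s,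
      extendPath (Fin.snoc y k : Fin (s + 2) → α) u = extendPath y u :=
    fun k u hu => extendPath_snoc_of_le y k hu
  simp only [fun k => hG (hpast k), fun k => dependsOn_martingalePart A f s (hpast k),
    martingalePart_extendPath_snoc, mul_left_comm (A _ _), ← mul_sum]
  refine mul_nonneg (hG0 _) ?_
  simp only [mul_sub, sum_sub_distrib, ← sum_mul, hA1, one_mul, sub_nonneg]
  exact abs_le_sum_mul_abs_add_sub_mulVec A f hA0 (hA1 _) _

lemma sum_partialSups_abs_mul_sub_le (x : ℕ → ℝ) (m : ℕ) :
    ∑ s ∈ range m, partialSups (fun u => |x u|) s * (|x (s + 1)| - |x s|) ≤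
      partialSups (fun u => |x u|) m * |x m| - partialSups (fun u => |x u|) m ^ 2 / 2 := by
  induction m with
  | zero => simp only [range_zero, sum_empty, partialSups_zero]; nlinarith [sq_abs (x 0)]
  | succ m ih =>
    have hsucc : partialSups (fun u => |x u|) (m + 1) =
        partialSups (fun u => |x u|) m ⊔ |x (m + 1)| :=
      partialSups_succ _ m
    rw [sum_range_succ, hsucc]
    rcases le_total |x (m + 1)| (partialSups (fun u => |x u|) m) with h | h
    · rw [sup_eq_left.2 h]
      linarith
    · rw [sup_eq_right.2 h]
      nlinarith [sq_nonneg (|x (m + 1)| - partialSups (fun u => |x u|) m)]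

/-- Pathwise form of Doob's `L²` inequality. -/
lemma sq_partialSups_abs_add_le (x : ℕ → ℝ) (m : ℕ) :
    partialSups (fun u => |x u|) m ^ 2 +
        4 * ∑ s ∈ range m, partialSups (fun u => |x u|) s * (|x (s + 1)| - |x s|) ≤
      4 * x m ^ 2 := by
  nlinarith [sum_partialSups_abs_mul_sub_le x m,
    sq_nonneg (partialSups (fun u => |x u|) m - 2 * |x m|), sq_abs (x m)]

lemma pathExpect_sq_martingaleMax_le (hπ0 : ∀ i, 0 ≤ π i) (hA0 : ∀ i j, 0 ≤ A i j)
    (hA1 : ∀ i, ∑ j, A i j = 1) (m : ℕ) :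
    pathExpect π A m (fun w => martingaleMax A f m w ^ 2) ≤
      4 * pathExpect π A m (fun w => martingalePart A f w m ^ 2) := by
  have hpath : pathExpect π A m (fun w => martingaleMax A f m w ^ 2 + 4 * ∑ s ∈ range m,
        martingaleMax A f s w * (|martingalePart A f w (s + 1)| - |martingalePart A f w s|)) ≤
      pathExpect π A m (fun w => 4 * martingalePart A f w m ^ 2) :=
    pathExpect_mono π A hπ0 hA0 m fun w => sq_partialSups_abs_add_le (martingalePart A f w) m
  rw [pathExpect_add, pathExpect_const_mul, pathExpect_const_mul, pathExpect_sum] at hpath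
  have hsub : 0 ≤ ∑ s ∈ range m, pathExpect π A m (fun w => martingaleMax A f s w *
      (|martingalePart A f w (s + 1)| - |martingalePart A f w s|)) :=
    sum_nonneg fun s hs => pathExpect_mul_abs_martingalePart_succ_sub_nonneg π A f hπ0 hA0 hA1
      (dependsOn_martingaleMax A f s) (martingaleMax_nonneg A f s) (mem_range.1 hs)
  linarith

/-- Adding the Doob decompositions of the path and of its time reversal `N` cancels the drift up
to boundary terms. -/
lemma two_mul_sub_eq_martingalePart_sub_reverse (w : ℕ → α) {s t : ℕ} (hs : s ≤ t) :
    2 * (f (w s) - f (w 0)) = martingalePart A f w s -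
      martingalePart A f (fun u => w (t - u)) t + martingalePart A f (fun u => w (t - u)) (t - s) -
      (A *ᵥ f - f) (w s) + (A *ᵥ f - f) (w 0) := by
  obtain ⟨r, rfl⟩ := Nat.exists_eq_add_of_le hs
  set g : ℕ → ℝ := fun u => (A *ᵥ f - f) (w u)
  have hg : ∀ u, (A *ᵥ f - f) (w u) = g u := fun _ => rfl
  have hreflect : ∀ a n, ∑ u ∈ range n, g (a + n - u) = ∑ u ∈ range n, g (a + u + 1) :=
    fun a n => by
      rw [← sum_range_reflect (fun u => g (a + u + 1))]
      exact sum_congr rfl fun u hu => by rw [mem_range] at hu; congr 1; omega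
  have hall : ∑ u ∈ range (s + r), g (s + r - u) =
      ∑ u ∈ range s, g (u + 1) + ∑ u ∈ range r, g (s + u + 1) := by
    simpa only [zero_add, sum_range_add, add_assoc] using hreflect 0 (s + r)
  have htel : ∑ u ∈ range s, g (u + 1) - ∑ u ∈ range s, g u = g s - g 0 := by
    rw [← sum_sub_distrib, sum_range_sub]
  simp only [martingalePart, Nat.sub_self, Nat.sub_zero, Nat.add_sub_cancel_left,
    Nat.add_sub_cancel, hg, hall, hreflect s r]
  linarith

lemma sq_sub_le_martingaleMax (w : ℕ → α) {s t : ℕ} (hs : s ≤ t) :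
    (f (w s) - f (w 0)) ^ 2 ≤ 5 / 4 * (martingaleMax A f t w ^ 2 +
      2 * martingaleMax A f t (fun u => w (t - u)) ^ 2 +
      2 * ∑ u ∈ range (t + 1), (A *ᵥ f - f) (w u) ^ 2) := by
  have hdecomp := two_mul_sub_eq_martingalePart_sub_reverse A f w hs
  have ha := sq_martingalePart_le_sq_martingaleMax A f w hs
  have hb := sq_martingalePart_le_sq_martingaleMax A f (fun u => w (t - u)) (le_refl t)
  have hc := sq_martingalePart_le_sq_martingaleMax A f (fun u => w (t - u)) (Nat.sub_le t s)
  have hd : (A *ᵥ f - f) (w s) ^ 2 ≤ ∑ u ∈ range (t + 1), (A *ᵥ f - f) (w u) ^ 2 :=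
    single_le_sum (f := fun u => (A *ᵥ f - f) (w u) ^ 2) (fun _ _ => sq_nonneg _)
      (mem_range.2 (Nat.lt_succ_of_le hs))
  have he : (A *ᵥ f - f) (w 0) ^ 2 ≤ ∑ u ∈ range (t + 1), (A *ᵥ f - f) (w u) ^ 2 :=
    single_le_sum (f := fun u => (A *ᵥ f - f) (w u) ^ 2) (fun _ _ => sq_nonneg _)
      (mem_range.2 (Nat.succ_pos t))
  set a := martingalePart A f w s
  set b := martingalePart A f (fun u => w (t - u)) t
  set c := martingalePart A f (fun u => w (t - u)) (t - s)
  set d := (A *ᵥ f - f) (w s)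
  set e := (A *ᵥ f - f) (w 0)
  have hcs : (a - b + c - d + e) ^ 2 ≤ 5 * (a ^ 2 + b ^ 2 + c ^ 2 + d ^ 2 + e ^ 2) := by
    nlinarith [sq_nonneg (a + b), sq_nonneg (a - c), sq_nonneg (a + d), sq_nonneg (a - e),
      sq_nonneg (b + c), sq_nonneg (b - d), sq_nonneg (b + e), sq_nonneg (c + d),
      sq_nonneg (c - e), sq_nonneg (d + e)]
  have hsq : (f (w s) - f (w 0)) ^ 2 = (a - b + c - d + e) ^ 2 / 4 := by
    rw [← hdecomp]
    ring
  linarith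

theorem pathExpect_partialSups_sq_sub_le (hπ0 : ∀ i, 0 ≤ π i) (hA0 : ∀ i j, 0 ≤ A i j)
    (hA1 : ∀ i, ∑ j, A i j = 1) (hstat : ∀ j, ∑ i, π i * A i j = π j)
    (hrev : ∀ i j, π i * A i j = π j * A j i) (t : ℕ) :
    pathExpect π A t (fun w => partialSups (fun s => (f (w s) - f (w 0)) ^ 2) t) ≤
      5 / 4 * (14 * t + 2) * meanSqIncrement π A f := by
  have hX : pathExpect π A t (fun w => martingaleMax A f t w ^ 2) ≤
      4 * (t * meanSqIncrement π A f) :=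
    (pathExpect_sq_martingaleMax_le π A f hπ0 hA0 hA1 t).trans <| by
      gcongr; exact pathExpect_sq_martingalePart_le π A f hπ0 hA1 hstat t
  have hY : pathExpect π A t (fun w => martingaleMax A f t (fun u => w (t - u)) ^ 2) ≤
      4 * (t * meanSqIncrement π A f) := by
    rwa [pathExpect_comp_reverse π A hrev t fun w => martingaleMax A f t w ^ 2]
  have hG : pathExpect π A t (fun w => ∑ u ∈ range (t + 1), (A *ᵥ f - f) (w u) ^ 2) ≤
      (t + 1) * meanSqIncrement π A f := by
    rw [pathExpect_sum]
    refine (sum_le_sum fun u hu => pathExpect_sq_drift_le π A f hπ0 hA0 hA1 hstat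
      (Nat.lt_succ_iff.1 (mem_range.1 hu))).trans ?_
    simp
  -- `5 / 4` from Cauchy–Schwarz on five terms; `14 t + 2 = 4 t + 2 (4 t) + 2 (t + 1)`
  calc _ ≤ pathExpect π A t (fun w => 5 / 4 * (martingaleMax A f t w ^ 2 +
          2 * martingaleMax A f t (fun u => w (t - u)) ^ 2 +
          2 * ∑ u ∈ range (t + 1), (A *ᵥ f - f) (w u) ^ 2)) :=
        pathExpect_mono π A hπ0 hA0 t fun w =>
          partialSups_le _ _ _ fun s hs => sq_sub_le_martingaleMax A f w hs
    _ = 5 / 4 * (pathExpect π A t (fun w => martingaleMax A f t w ^ 2) +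
          2 * pathExpect π A t (fun w => martingaleMax A f t (fun u => w (t - u)) ^ 2) +
          2 * pathExpect π A t (fun w => ∑ u ∈ range (t + 1), (A *ᵥ f - f) (w u) ^ 2)) := by
        rw [pathExpect_const_mul, pathExpect_add, pathExpect_add, pathExpect_const_mul,
          pathExpect_const_mul]
    _ ≤ 5 / 4 * (14 * t + 2) * meanSqIncrement π A f := by linarith

end MarkovChain

open MarkovChain

theorem markov_chain_maximal_inequality_general
    (n : ℕ) (π : Fin n → ℝ) (A : Matrix (Fin n) (Fin n) ℝ)
    (hπ0 : ∀ i, 0 ≤ π i)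
    (hA0 : ∀ i j, 0 ≤ A i j) (hA1 : ∀ i, ∑ j, A i j = 1)
    (hstat : ∀ j, ∑ i, π i * A i j = π j)
    (hrev : ∀ i j, π i * A i j = π j * A j i)
    (f : Fin n → ℝ) (t : ℕ) (ht : 0 < t) :
    ∑ z : Fin (t + 1) → Fin n,
        (π (z 0) * ∏ s : Fin t, A (z s.castSucc) (z s.succ)) *
          Finset.univ.sup' ⟨0, Finset.mem_univ 0⟩
            (fun s : Fin (t + 1) => (f (z s) - f (z 0)) ^ 2) ≤
      100 * t * ∑ i, ∑ j, π i * A i j * (f j - f i) ^ 2 := by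
  calc _ ≤ pathExpect π A t (fun w => partialSups (fun s => (f (w s) - f (w 0)) ^ 2) t) := by
        refine sum_le_sum fun z _ => ?_
        rw [← pathWeight_extendPath]
        refine mul_le_mul_of_nonneg_left (sup'_le _ _ fun s _ => ?_)
          (pathWeight_nonneg π A hπ0 hA0 t _)
        have := le_partialSups_of_le (fun s => (f (extendPath z s) - f (extendPath z 0)) ^ 2)
          (Nat.le_of_lt_succ s.is_lt)
        simpa only [extendPath_val, extendPath_zero] using this
    _ ≤ 5 / 4 * (14 * t + 2) * meanSqIncrement π A f :=
        pathExpect_partialSups_sq_sub_le π A f hπ0 hA0 hA1 hstat hrev t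
    _ ≤ 100 * t * meanSqIncrement π A f := by
        have ht1 : (1 : ℝ) ≤ t := by exact_mod_cast ht
        nlinarith [meanSqIncrement_nonneg π A f hπ0 hA0]

/-- Maximal inequality for stationary reversible finite Markov chains on the line:
`E max_{0 ≤ s ≤ t} (f(Z_s) - f(Z_0))² ≤ 100 t E (f(Z_1) - f(Z_0))²`.
The expectation on the left is written as the sum, over all trajectories
`z : Fin (t+1) → Fin n`, of the probability `π(z₀) ∏_{s<t} a_{z_s z_{s+1}}` of the
trajectory times the maximum of `(f(z_s) - f(z_0))²` along it. -/
theorem markov_chain_maximal_inequality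
    (n : ℕ) (π : Fin n → ℝ) (A : Matrix (Fin n) (Fin n) ℝ)
    (hπ0 : ∀ i, 0 ≤ π i) (hπ1 : ∑ i, π i = 1)
    (hA0 : ∀ i j, 0 ≤ A i j) (hA1 : ∀ i, ∑ j, A i j = 1)
    (hstat : ∀ j, ∑ i, π i * A i j = π j)
    (hrev : ∀ i j, π i * A i j = π j * A j i)
    (f : Fin n → ℝ) (t : ℕ) (ht : 0 < t) :
    ∑ z : Fin (t + 1) → Fin n,
        (π (z 0) * ∏ s : Fin t, A (z s.castSucc) (z s.succ)) *
          Finset.univ.sup' ⟨0, Finset.mem_univ 0⟩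
            (fun s : Fin (t + 1) => (f (z s) - f (z 0)) ^ 2) ≤
      100 * t * ∑ i, ∑ j, π i * A i j * (f j - f i) ^ 2 :=
  markov_chain_maximal_inequality_general n π A hπ0 hA0 hA1 hstat hrev f t ht
end

section
/- Let X be a δ-hyperbolic metric space. Then for every m ≥ 1 and points r, x_0, ..., x_m ∈ X: d(x_0, x_m)² ≤ 4 max_{0 ≤ j < m}(d(x_0,r) - d(x_j,r))² + 4 max_{0 < j ≤ m}(d(x_m,r) - d(x_j,r))² + 4 ∑_{j=0}^{m-1} d(x_j, x_{j+1})² + 16 δ² ⌈log₂ m⌉². -/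
open Finset

/-- In a `δ`-hyperbolic metric space (hyperbolicity stated via the Gromov product
`⟨x|y⟩_r = (d(x,r) + d(y,r) - d(x,y))/2`), for every `m ≥ 1` and points
`r, x_0, …, x_m`:
`d(x_0,x_m)² ≤ 4 max_{0≤j<m}(d(x_0,r)-d(x_j,r))² + 4 max_{0<j≤m}(d(x_m,r)-d(x_j,r))²
  + 4 ∑_{j<m} d(x_j,x_{j+1})² + 16 δ² ⌈log₂ m⌉²`. -/
theorem hyperbolic_chain_inequality
    {X : Type*} [MetricSpace X] (δ : ℝ) (hδ : 0 ≤ δ)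
    (hhyp : ∀ x y z r : X,
      min ((dist x r + dist z r - dist x z) / 2) ((dist y r + dist z r - dist y z) / 2)
          - δ ≤ (dist x r + dist y r - dist x y) / 2)
    (m : ℕ) (hm : 1 ≤ m) (r : X) (x : ℕ → X) :
    dist (x 0) (x m) ^ 2 ≤
      4 * (range m).sup' ⟨0, mem_range.2 hm⟩
          (fun j => (dist (x 0) r - dist (x j) r) ^ 2) +
        4 * (range m).sup' ⟨0, mem_range.2 hm⟩
          (fun j => (dist (x m) r - dist (x (j + 1)) r) ^ 2) +
        4 * ∑ j ∈ range m, dist (x j) (x (j + 1)) ^ 2 +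
        16 * δ ^ 2 * (Nat.clog 2 m : ℝ) ^ 2 := by
  set g : ℕ → ℕ → ℝ := fun i j => (dist (x i) r + dist (x j) r - dist (x i) (x j)) / 2 with hg
  have chain : ∀ n, 1 ≤ n → ∀ a : ℕ, ∃ j, a ≤ j ∧ j < a + n ∧
      g j (j + 1) - δ * (Nat.clog 2 n : ℝ) ≤ g a (a + n) := by
    intro n
    induction n using Nat.strong_induction_on with
    | _ n IH =>
      intro hn a
      rcases eq_or_lt_of_le hn with h1 | h2
      · refine ⟨a, le_refl a, by omega, ?_⟩
        have hc : Nat.clog 2 n = 0 := by rw [← h1]; simp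
        rw [hc, ← h1]
        simp
      · set k := (n + 1) / 2 with hk
        have hk1 : 1 ≤ k := by omega
        have hkn : k < n := by omega
        have hnk1 : 1 ≤ n - k := by omega
        have hnkk : n - k ≤ k := by omega
        obtain ⟨j₁, hj₁a, hj₁b, hj₁⟩ := IH k hkn hk1 a
        obtain ⟨j₂, hj₂a, hj₂b, hj₂⟩ := IH (n - k) (by omega) hnk1 (a + k)
        have heq : a + k + (n - k) = a + n := by omega
        rw [heq] at hj₂ hj₂b
        have hclog : Nat.clog 2 n = Nat.clog 2 k + 1 := by
          rw [Nat.clog_of_one_lt (by norm_num) h2]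
          congr 2
        have hmono : (Nat.clog 2 (n - k) : ℝ) ≤ (Nat.clog 2 k : ℝ) := by
          exact_mod_cast Nat.clog_mono_right 2 hnkk
        have hyp := hhyp (x a) (x (a + n)) (x (a + k)) r
        have hyp' : min (g a (a + k)) (g (a + k) (a + n)) - δ ≤ g a (a + n) := by
          simpa only [hg, dist_comm (x (a + n)) (x (a + k)),
            add_comm (dist (x (a + n)) r) (dist (x (a + k)) r)] using hyp
        rcases le_total (g a (a + k)) (g (a + k) (a + n)) with hmin | hmin
        · refine ⟨j₁, hj₁a, by omega, ?_⟩
          rw [min_eq_left hmin] at hyp'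
          rw [hclog]
          push_cast
          linarith
        · refine ⟨j₂, by omega, by omega, ?_⟩
          rw [min_eq_right hmin] at hyp'
          rw [hclog]
          push_cast
          have : δ * (Nat.clog 2 (n - k) : ℝ) ≤ δ * (Nat.clog 2 k : ℝ) :=
            mul_le_mul_of_nonneg_left hmono hδ
          linarith
  obtain ⟨j, hj0, hjm, hj⟩ := chain m hm 0
  rw [zero_add] at hjm hj
  set L : ℝ := (Nat.clog 2 m : ℝ) with hL
  have hL0 : 0 ≤ L := Nat.cast_nonneg _
  set A : ℝ := dist (x 0) r - dist (x j) r with hA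
  set B : ℝ := dist (x m) r - dist (x (j + 1)) r with hB
  set C : ℝ := dist (x j) (x (j + 1)) with hC
  have hS : dist (x 0) (x m) ≤ A + B + C + 2 * δ * L := by
    simp only [hg] at hj
    simp only [hA, hB, hC, hL]
    linarith
  have hsq : dist (x 0) (x m) ^ 2 ≤ (A + B + C + 2 * δ * L) ^ 2 :=
    pow_le_pow_left₀ dist_nonneg hS 2
  have hsq2 : (A + B + C + 2 * δ * L) ^ 2 ≤
      4 * A ^ 2 + 4 * B ^ 2 + 4 * C ^ 2 + 16 * δ ^ 2 * L ^ 2 := by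
    nlinarith [sq_nonneg (A - B), sq_nonneg (A - C), sq_nonneg (A - 2 * δ * L),
      sq_nonneg (B - C), sq_nonneg (B - 2 * δ * L), sq_nonneg (C - 2 * δ * L)]
  have hAle : A ^ 2 ≤ (range m).sup' ⟨0, mem_range.2 hm⟩
      (fun j => (dist (x 0) r - dist (x j) r) ^ 2) := by
    simpa [hA] using le_sup' (fun j => (dist (x 0) r - dist (x j) r) ^ 2) (mem_range.2 hjm)
  have hBle : B ^ 2 ≤ (range m).sup' ⟨0, mem_range.2 hm⟩
      (fun j => (dist (x m) r - dist (x (j + 1)) r) ^ 2) := by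
    simpa [hB] using
      le_sup' (fun j => (dist (x m) r - dist (x (j + 1)) r) ^ 2) (mem_range.2 hjm)
  have hCle : C ^ 2 ≤ ∑ j ∈ range m, dist (x j) (x (j + 1)) ^ 2 := by
    simpa [hC] using Finset.single_le_sum (f := fun j => dist (x j) (x (j + 1)) ^ 2)
      (fun i _ => sq_nonneg _) (mem_range.2 hjm)
  linarith
end

section
/- Let X be a metric space, A ⊂ X a subset, T a complete ℝ-tree, and φ: A → T a Lipschitz map with constant L. Then φ extends to a map φ̃: X → T with φ̃|_A = φ and Lipschitz constant L. -/
open Set Filter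

/-- Gromov product at a basepoint. -/
private noncomputable def gp {T : Type*} [MetricSpace T] (c a b : T) : ℝ :=
  (dist c a + dist c b - dist a b) / 2

private lemma gp_comm {T : Type*} [MetricSpace T] (c a b : T) : gp c a b = gp c b a := by
  unfold gp; rw [dist_comm a b]; ring

private lemma dist_eq_gp {T : Type*} [MetricSpace T] (c a b : T) :
    dist a b = dist c a + dist c b - 2 * gp c a b := by
  unfold gp; ring

/-- Helly property for closed balls in a complete ℝ-tree. -/
private lemma helly_balls {T : Type*} [MetricSpace T] [CompleteSpace T]
    (hgeo : ∀ x y : T, ∃ γ : ℝ → T, γ 0 = x ∧ γ (dist x y) = y ∧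
      ∀ s t : ℝ, s ∈ Set.Icc 0 (dist x y) → t ∈ Set.Icc 0 (dist x y) →
        dist (γ s) (γ t) = |s - t|)
    (hhyp : ∀ x y z r : T,
      min ((dist x r + dist z r - dist x z) / 2) ((dist y r + dist z r - dist y z) / 2) ≤
        (dist x r + dist y r - dist x y) / 2)
    {ι : Type*} [Nonempty ι] (t : ι → T) (r : ι → ℝ)
    (hr : ∀ i, 0 ≤ r i) (hpair : ∀ i j, dist (t i) (t j) ≤ r i + r j) :
    ∃ p : T, ∀ i, dist p (t i) ≤ r i := by
  classical
  have hH : ∀ c a b w : T, min (gp c a w) (gp c b w) ≤ gp c a b := by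
    intro c a b w
    have := hhyp a b w c
    simpa [gp, dist_comm] using this
  obtain ⟨i₀⟩ := ‹Nonempty ι›
  set x := t i₀ with hx
  set s : ι → ℝ := fun i => dist x (t i) - r i with hs
  have hsub : ∀ i, s i ≤ r i₀ := by
    intro i
    have := hpair i₀ i
    simp only [hs]
    linarith
  have hSne : (Set.range s).Nonempty := ⟨s i₀, ⟨i₀, rfl⟩⟩
  have hSbdd : BddAbove (Set.range s) := ⟨r i₀, by rintro _ ⟨i, rfl⟩; exact hsub i⟩
  set ρ := sSup (Set.range s) with hρdef
  have hle_ρ : ∀ i, s i ≤ ρ := fun i => le_csSup hSbdd ⟨i, rfl⟩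
  by_cases hρ : ρ ≤ 0
  · refine ⟨x, fun i => ?_⟩
    have h1 := hle_ρ i
    simp only [hs] at h1
    linarith
  push_neg at hρ
  -- choose an "almost sup" sequence
  have hex : ∀ n : ℕ, ∃ i, ρ - min ρ (1 / (n + 1)) < s i := by
    intro n
    have hpos : 0 < min ρ (1 / ((n : ℝ) + 1)) := lt_min hρ (by positivity)
    obtain ⟨_, ⟨i, rfl⟩, hlt⟩ := exists_lt_of_lt_csSup hSne
      (show ρ - min ρ (1 / ((n : ℝ) + 1)) < ρ by linarith)
    exact ⟨i, hlt⟩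
  choose idx hidx using hex
  set σ : ℕ → ℝ := fun n => s (idx n) with hσdef
  have hσpos : ∀ n, 0 < σ n := by
    intro n
    have h1 := hidx n
    have h2 : min ρ (1 / ((n : ℝ) + 1)) ≤ ρ := min_le_left _ _
    have : (0:ℝ) ≤ ρ - min ρ (1 / ((n : ℝ) + 1)) := by linarith
    exact lt_of_le_of_lt this h1
  have hσle : ∀ n, σ n ≤ ρ := fun n => hle_ρ _
  have hσlb : ∀ n : ℕ, ρ - 1 / ((n : ℝ) + 1) < σ n := by
    intro n
    have h1 := hidx n
    have h2 : min ρ (1 / ((n : ℝ) + 1)) ≤ 1 / ((n : ℝ) + 1) := min_le_right _ _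
    calc ρ - 1 / ((n : ℝ) + 1) ≤ ρ - min ρ (1 / ((n : ℝ) + 1)) := by linarith
    _ < σ n := h1
  have hσd : ∀ n, σ n ≤ dist x (t (idx n)) := by
    intro n
    have := hr (idx n)
    simp only [hσdef, hs]
    linarith
  choose γ hγ0 hγe hγd using fun n => hgeo x (t (idx n))
  set p : ℕ → T := fun n => γ n (σ n) with hpdef
  have h0mem : ∀ n, (0:ℝ) ∈ Set.Icc 0 (dist x (t (idx n))) := fun n => ⟨le_refl _, dist_nonneg⟩
  have hσmem : ∀ n, σ n ∈ Set.Icc 0 (dist x (t (idx n))) := fun n => ⟨(hσpos n).le, hσd n⟩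
  have hdmem : ∀ n, dist x (t (idx n)) ∈ Set.Icc 0 (dist x (t (idx n))) :=
    fun n => ⟨dist_nonneg, le_refl _⟩
  have hxp : ∀ n, dist x (p n) = σ n := by
    intro n
    calc dist x (p n) = dist (γ n 0) (γ n (σ n)) := by rw [hγ0 n]
    _ = |0 - σ n| := hγd n 0 (σ n) (h0mem n) (hσmem n)
    _ = σ n := by rw [zero_sub, abs_neg, abs_of_pos (hσpos n)]
  have hpt : ∀ n, dist (p n) (t (idx n)) = dist x (t (idx n)) - σ n := by
    intro n
    calc dist (p n) (t (idx n)) = dist (γ n (σ n)) (γ n (dist x (t (idx n)))) := by rw [hγe n]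
    _ = |σ n - dist x (t (idx n))| := hγd n _ _ (hσmem n) (hdmem n)
    _ = dist x (t (idx n)) - σ n := by
        rw [abs_of_nonpos (by linarith [hσd n])]; ring
  have hgpσ : ∀ n, gp x (p n) (t (idx n)) = σ n := by
    intro n
    unfold gp
    rw [hxp n, hpt n]
    ring
  -- key: Gromov product with p n is at least min of σ n and product with the endpoint
  have hkey : ∀ n (w : T), min (σ n) (gp x (t (idx n)) w) ≤ gp x (p n) w := by
    intro n w
    have h1 := hH x (p n) w (t (idx n))
    rw [hgpσ n, gp_comm x w (t (idx n))] at h1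
    exact h1
  have hgp_t : ∀ i j, (s i + s j) / 2 ≤ gp x (t i) (t j) := by
    intro i j
    have := hpair i j
    simp only [gp, hs]
    linarith
  have hmin_avg : ∀ a b : ℝ, min a b ≤ (a + b) / 2 := by
    intro a b
    rcases le_total a b with h | h
    · rw [min_eq_left h]; linarith
    · rw [min_eq_right h]; linarith
  have hdpp : ∀ n m, dist (p n) (p m) ≤ |σ n - σ m| := by
    intro n m
    have h2 : min (σ n) (gp x (t (idx n)) (t (idx m))) ≤ gp x (p n) (t (idx m)) :=
      hkey n (t (idx m))
    have h3 := hgp_t (idx n) (idx m)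
    have h1 : min (σ m) (gp x (t (idx m)) (p n)) ≤ gp x (p m) (p n) := hkey m (p n)
    rw [gp_comm x (t (idx m)) (p n)] at h1
    have hmm : min (σ n) (σ m) ≤ gp x (p m) (p n) := by
      refine le_trans (le_min (min_le_right _ _) ?_) h1
      refine le_trans (le_min (min_le_left _ _) ?_) h2
      exact le_trans (hmin_avg (σ n) (σ m)) h3
    have hd : dist (p m) (p n) = σ m + σ n - 2 * gp x (p m) (p n) := by
      rw [dist_eq_gp x (p m) (p n), hxp m, hxp n]
    rw [dist_comm (p n) (p m), hd]
    rcases le_total (σ n) (σ m) with h | h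
    · rw [min_eq_left h] at hmm
      rw [abs_of_nonpos (by linarith)]
      linarith
    · rw [min_eq_right h] at hmm
      rw [abs_of_nonneg (by linarith)]
      linarith
  have hsval : ∀ j, s j = dist x (t j) - r j := fun j => rfl
  have hσs : ∀ n, σ n = s (idx n) := fun n => rfl
  clear hx hρdef hσdef hpdef
  clear_value p σ ρ s x
  have hcauchy : CauchySeq p := by
    rw [Metric.cauchySeq_iff']
    intro ε hε
    obtain ⟨N, hN⟩ := exists_nat_one_div_lt hε
    refine ⟨N, fun n hn => ?_⟩
    have h1 : dist (p n) (p N) ≤ |σ n - σ N| := hdpp n N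
    have hfrac : 1 / ((n : ℝ) + 1) ≤ 1 / ((N : ℝ) + 1) := by
      apply one_div_le_one_div_of_le (by positivity)
      exact_mod_cast Nat.succ_le_succ hn
    have h2 : |σ n - σ N| < 1 / ((N : ℝ) + 1) := by
      rw [abs_lt]
      constructor
      · have := hσlb n; have := hσle N; linarith
      · have := hσlb N; have := hσle n; linarith
    linarith
  obtain ⟨q, hq⟩ := cauchySeq_tendsto_of_complete hcauchy
  refine ⟨q, fun j => ?_⟩
  have hbound : ∀ n, dist (p n) (t j) ≤ r j + 2 * (1 / ((n : ℝ) + 1)) := by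
    intro n
    have h2 : min (σ n) (gp x (t (idx n)) (t j)) ≤ gp x (p n) (t j) := hkey n (t j)
    have h3 : (σ n + s j) / 2 ≤ gp x (t (idx n)) (t j) := by
      rw [hσs n]; exact hgp_t (idx n) j
    have h4 : min (σ n) ((σ n + s j) / 2) ≤ gp x (p n) (t j) :=
      le_trans (min_le_min (le_refl _) h3) h2
    have h5 : (σ n + s j) / 2 - 1 / ((n : ℝ) + 1) ≤ min (σ n) ((σ n + s j) / 2) := by
      rcases le_total (s j) (σ n) with h | h
      · rw [min_eq_right (by linarith)]
        have : (0:ℝ) < 1 / ((n : ℝ) + 1) := by positivity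
        linarith
      · rw [min_eq_left (by linarith)]
        have h6 := hle_ρ j
        have h7 := hσlb n
        linarith
    have hd : dist (p n) (t j) = σ n + dist x (t j) - 2 * gp x (p n) (t j) := by
      rw [dist_eq_gp x (p n) (t j), hxp n]
    rw [hd]
    have : (σ n + s j) / 2 - 1 / ((n : ℝ) + 1) ≤ gp x (p n) (t j) := le_trans h5 h4
    rw [hsval j] at this
    linarith
  have hlim1 : Tendsto (fun n => dist (p n) (t j)) atTop (nhds (dist q (t j))) :=
    hq.dist tendsto_const_nhds
  have hlim2 : Tendsto (fun n : ℕ => r j + 2 * (1 / ((n : ℝ) + 1))) atTop (nhds (r j)) := by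
    have h0 : Tendsto (fun n : ℕ => 2 * (1 / ((n : ℝ) + 1))) atTop (nhds (2 * 0)) :=
      tendsto_one_div_add_atTop_nhds_zero_nat.const_mul 2
    have := tendsto_const_nhds (x := r j) (f := atTop (α := ℕ)) |>.add h0
    simpa [mul_one_div] using this
  exact le_of_tendsto_of_tendsto' hlim1 hlim2 hbound

/-- A complete `ℝ`-tree (a geodesic, `0`-hyperbolic complete metric space) is a
Lipschitz extension target: every `L`-Lipschitz map from a subset `A` of a metric
space `X` into `T` extends to an `L`-Lipschitz map on all of `X` agreeing with the
original map on `A`. -/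
theorem lipschitz_extension_to_real_tree
    {X T : Type*} [MetricSpace X] [MetricSpace T] [CompleteSpace T]
    -- `T` is a geodesic (path metric) space ...
    (hgeo : ∀ x y : T, ∃ γ : ℝ → T, γ 0 = x ∧ γ (dist x y) = y ∧
      ∀ s t : ℝ, s ∈ Set.Icc 0 (dist x y) → t ∈ Set.Icc 0 (dist x y) →
        dist (γ s) (γ t) = |s - t|)
    -- ... which is `0`-hyperbolic; together these say `T` is an `ℝ`-tree.
    (hhyp : ∀ x y z r : T,
      min ((dist x r + dist z r - dist x z) / 2) ((dist y r + dist z r - dist y z) / 2) ≤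
        (dist x r + dist y r - dist x y) / 2)
    (A : Set X) (f : X → T) (L : NNReal) (hf : LipschitzOnWith L f A) :
    ∃ g : X → T, LipschitzWith L g ∧ Set.EqOn g f A := by
  classical
  rcases A.eq_empty_or_nonempty with hA | ⟨a₀, ha₀⟩
  · subst hA
    rcases isEmpty_or_nonempty X with hX | hX
    · exact ⟨f, fun x => isEmptyElim x, fun x hx => absurd hx (Set.notMem_empty x)⟩
    · exact ⟨fun _ => f (Classical.arbitrary X),
        (LipschitzWith.const (f (Classical.arbitrary X))).weaken (zero_le : (0 : NNReal) ≤ L),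
        fun x hx => absurd hx (Set.notMem_empty x)⟩
  -- the set of graphs of partial L-Lipschitz extensions of f
  set 𝒮 : Set (Set (X × T)) :=
    {m | (∀ a ∈ A, (a, f a) ∈ m) ∧ ∀ u ∈ m, ∀ v ∈ m, dist u.2 v.2 ≤ L * dist u.1 v.1} with h𝒮
  have hs₀ : (fun a => (a, f a)) '' A ∈ 𝒮 := by
    constructor
    · intro a ha; exact ⟨a, ha, rfl⟩
    · rintro u ⟨a, ha, rfl⟩ v ⟨b, hb, rfl⟩
      exact lipschitzOnWith_iff_dist_le_mul.1 hf a ha b hb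
  have hub : ∀ c ⊆ 𝒮, IsChain (· ⊆ ·) c → c.Nonempty → ∃ ub ∈ 𝒮, ∀ s ∈ c, s ⊆ ub := by
    intro c hc hchain hne
    refine ⟨⋃₀ c, ⟨?_, ?_⟩, fun s hs => subset_sUnion_of_mem hs⟩
    · intro a ha
      obtain ⟨s, hs⟩ := hne
      exact ⟨s, hs, (hc hs).1 a ha⟩
    · rintro u ⟨s₁, hs₁, hu⟩ v ⟨s₂, hs₂, hv⟩
      rcases hchain.total hs₁ hs₂ with h | h
      · exact (hc hs₂).2 u (h hu) v hv
      · exact (hc hs₁).2 u hu v (h hv)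
  obtain ⟨m, hsub, hm𝒮, hmax⟩ := zorn_subset_nonempty 𝒮 hub _ hs₀
  have hmLip : ∀ u ∈ m, ∀ v ∈ m, dist u.2 v.2 ≤ L * dist u.1 v.1 := hm𝒮.2
  have hmA : ∀ a ∈ A, (a, f a) ∈ m := hm𝒮.1
  have hmne : Nonempty m := ⟨⟨(a₀, f a₀), hmA a₀ ha₀⟩⟩
  -- every point of X is in the domain of m
  have htotal : ∀ x : X, ∃ tt : T, (x, tt) ∈ m := by
    intro x
    have hpw : ∀ u v : m, dist (u : X × T).2 (v : X × T).2 ≤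
        L * dist x (u : X × T).1 + L * dist x (v : X × T).1 := by
      intro u v
      have h1 := hmLip u u.2 v v.2
      have h2 : dist (u : X × T).1 (v : X × T).1 ≤ dist x (u : X × T).1 + dist x (v : X × T).1 := by
        rw [dist_comm x (u : X × T).1]
        exact dist_triangle _ _ _
      calc dist (u : X × T).2 (v : X × T).2 ≤ L * dist (u : X × T).1 (v : X × T).1 := h1
      _ ≤ L * (dist x (u : X × T).1 + dist x (v : X × T).1) :=
          mul_le_mul_of_nonneg_left h2 L.2
      _ = L * dist x (u : X × T).1 + L * dist x (v : X × T).1 := by ring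
    obtain ⟨tt, htt⟩ := helly_balls hgeo hhyp (fun u : m => (u : X × T).2)
      (fun u : m => L * dist x (u : X × T).1)
      (fun u => mul_nonneg L.2 dist_nonneg) hpw
    refine ⟨tt, ?_⟩
    have hins : insert (x, tt) m ∈ 𝒮 := by
      constructor
      · intro a ha; exact Set.mem_insert_of_mem _ (hmA a ha)
      · intro u hu v hv
        rcases hu with hu | hu <;> rcases hv with hv | hv
        · subst hu; subst hv; simp
        · subst hu
          have := htt ⟨v, hv⟩
          simpa [dist_comm] using this
        · subst hv
          have := htt ⟨u, hu⟩
          simpa [dist_comm] using this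
        · exact hmLip u hu v hv
    exact hmax hins (Set.subset_insert _ _) (Set.mem_insert _ _)
  choose g hg using htotal
  refine ⟨g, LipschitzWith.of_dist_le_mul fun x y => hmLip (x, g x) (hg x) (y, g y) (hg y), ?_⟩
  intro a ha
  have h1 := hmLip (a, g a) (hg a) (a, f a) (hmA a ha)
  simp only [dist_self, mul_zero] at h1
  exact dist_le_zero.1 h1
end

section
/- In a complete ℝ-tree T, if two closed balls B(t, r) and B(t', r') intersect, then their intersection is again a closed ball: if neither ball contains the other, then B(t,r) ∩ B(t',r') is the closed ball centered at the unique point at distance (d(t,t') + r - r')/2 from t and (d(t,t') + r' - r)/2 from t', with radius (r + r' - d(t,t'))/2. -/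
/-!
The centre is the point `c` of the geodesic `[t, t']` with `d(t, c) + ρ = r` and `d(t', c) + ρ = r'`,
where `ρ = (r + r' - d(t, t'))/2`; it exists because neither ball contains the other. Since `c`
lies on `[t, t']`, the Gromov product `(t|t')_c` vanishes, so the four-point condition
`(t|t')_c ≥ min ((t|w)_c, (t'|w)_c)` forces
`d(w, c) ≤ d(w, t) - d(t, c)` or `d(w, c) ≤ d(w, t') - d(t', c)` for every `w`. This gives the
inclusion `B(t, r) ∩ B(t', r') ⊆ B(c, ρ)`, and with `w` another such centre, uniqueness of `c`.
The reverse inclusion is the triangle inequality.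
-/

open Metric Set

section RealTree

variable {T : Type*} [PseudoMetricSpace T]

theorem exists_dist_eq_dist_sub_of_geodesic {t t' : T}
    (hgeo : ∃ γ : ℝ → T, γ 0 = t ∧ γ (dist t t') = t' ∧
      ∀ s u : ℝ, s ∈ Icc 0 (dist t t') → u ∈ Icc 0 (dist t t') → dist (γ s) (γ u) = |s - u|)
    {a : ℝ} (ha : a ∈ Icc 0 (dist t t')) :
    ∃ c : T, dist t c = a ∧ dist t' c = dist t t' - a := by
  obtain ⟨γ, hγ0, hγd, hγ⟩ := hgeo
  refine ⟨γ a, ?_, ?_⟩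
  · rw [← hγ0, hγ 0 a ⟨le_rfl, dist_nonneg⟩ ha, abs_sub_comm, sub_zero, abs_of_nonneg ha.1]
  · conv_lhs => rw [← hγd]
    rw [hγ _ a ⟨dist_nonneg, le_rfl⟩ ha, abs_of_nonneg (sub_nonneg.mpr ha.2)]

variable (hhyp : ∀ x y z r : T,
      min ((dist x r + dist z r - dist x z) / 2) ((dist y r + dist z r - dist y z) / 2) ≤
        (dist x r + dist y r - dist x y) / 2)
include hhyp

theorem dist_le_or_dist_le_of_dist_add_dist_eq {t t' c : T}
    (hc : dist t c + dist t' c = dist t t') (w : T) :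
    dist w c ≤ dist t w - dist t c ∨ dist w c ≤ dist t' w - dist t' c := by
  rcases min_le_iff.mp (hhyp t t' w c) with h | h
  · left; linarith
  · right; linarith

theorem closedBall_inter_closedBall_eq_of_dist_add_dist_eq {t t' c : T}
    {r r' ρ : ℝ} (hc : dist t c + dist t' c = dist t t') (hr : dist t c + ρ = r)
    (hr' : dist t' c + ρ = r') :
    closedBall t r ∩ closedBall t' r' = closedBall c ρ := by
  ext w
  simp only [mem_inter_iff, mem_closedBall, dist_comm w t, dist_comm w t']
  constructor
  · rintro ⟨hwt, hwt'⟩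
    rcases dist_le_or_dist_le_of_dist_add_dist_eq hhyp hc w with h | h <;> linarith
  · intro hwc
    exact ⟨by linarith [dist_triangle_right t w c], by linarith [dist_triangle_right t' w c]⟩

theorem dist_eq_zero_of_dist_eq_of_dist_add_dist_eq {t t' c c' : T}
    (hc : dist t c + dist t' c = dist t t') (h : dist t c' = dist t c)
    (h' : dist t' c' = dist t' c) : dist c' c = 0 := by
  refine le_antisymm ?_ dist_nonneg
  rcases dist_le_or_dist_le_of_dist_add_dist_eq hhyp hc c' with hc' | hc'
  · linarith [dist_comm t c']
  · linarith [dist_comm t' c']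

end RealTree

theorem real_tree_ball_intersection_general
    {T : Type*} [MetricSpace T]
    (hgeo : ∀ x y : T, ∃ γ : ℝ → T, γ 0 = x ∧ γ (dist x y) = y ∧
      ∀ s u : ℝ, s ∈ Set.Icc 0 (dist x y) → u ∈ Set.Icc 0 (dist x y) →
        dist (γ s) (γ u) = |s - u|)
    (hhyp : ∀ x y z r : T,
      min ((dist x r + dist z r - dist x z) / 2) ((dist y r + dist z r - dist y z) / 2) ≤
        (dist x r + dist y r - dist x y) / 2)
    (t t' : T) (r r' : ℝ)
    (h1 : ¬ Metric.closedBall t r ⊆ Metric.closedBall t' r')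
    (h2 : ¬ Metric.closedBall t' r' ⊆ Metric.closedBall t r) :
    ∃ c : T,
      dist t c = (dist t t' + r - r') / 2 ∧
      dist t' c = (dist t t' + r' - r) / 2 ∧
      (∀ c' : T, dist t c' = (dist t t' + r - r') / 2 →
        dist t' c' = (dist t t' + r' - r) / 2 → c' = c) ∧
      Metric.closedBall t r ∩ Metric.closedBall t' r' =
        Metric.closedBall c ((r + r' - dist t t') / 2) := by
  have hr' : r' < r + dist t t' := not_le.mp (mt closedBall_subset_closedBall' h1)
  have hr : r < r' + dist t' t := not_le.mp (mt closedBall_subset_closedBall' h2)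
  rw [dist_comm] at hr
  obtain ⟨c, htc, ht'c⟩ := exists_dist_eq_dist_sub_of_geodesic (hgeo t t')
    (a := (dist t t' + r - r') / 2) ⟨by linarith, by linarith⟩
  replace ht'c : dist t' c = (dist t t' + r' - r) / 2 := by rw [ht'c]; ring
  have hc : dist t c + dist t' c = dist t t' := by rw [htc, ht'c]; ring
  refine ⟨c, htc, ht'c, fun c' h h' ↦ ?_, ?_⟩
  · exact dist_eq_zero.mp <|
      dist_eq_zero_of_dist_eq_of_dist_add_dist_eq hhyp hc (h.trans htc.symm) (h'.trans ht'c.symm)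
  · exact closedBall_inter_closedBall_eq_of_dist_add_dist_eq hhyp hc
      (by rw [htc]; ring) (by rw [ht'c]; ring)

/-- In a complete `ℝ`-tree (geodesic `0`-hyperbolic complete metric space), if two
closed balls `B(t,r)` and `B(t',r')` intersect and neither contains the other, then
their intersection is the closed ball centered at the unique point `c` at distance
`(d(t,t') + r - r')/2` from `t` and `(d(t,t') + r' - r)/2` from `t'`, with radius
`(r + r' - d(t,t'))/2`. -/
theorem real_tree_ball_intersection
    {T : Type*} [MetricSpace T] [CompleteSpace T]
    (hgeo : ∀ x y : T, ∃ γ : ℝ → T, γ 0 = x ∧ γ (dist x y) = y ∧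
      ∀ s u : ℝ, s ∈ Set.Icc 0 (dist x y) → u ∈ Set.Icc 0 (dist x y) →
        dist (γ s) (γ u) = |s - u|)
    (hhyp : ∀ x y z r : T,
      min ((dist x r + dist z r - dist x z) / 2) ((dist y r + dist z r - dist y z) / 2) ≤
        (dist x r + dist y r - dist x y) / 2)
    (t t' : T) (r r' : ℝ)
    (hne : (Metric.closedBall t r ∩ Metric.closedBall t' r').Nonempty)
    (h1 : ¬ Metric.closedBall t r ⊆ Metric.closedBall t' r')
    (h2 : ¬ Metric.closedBall t' r' ⊆ Metric.closedBall t r) :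
    ∃ c : T,
      dist t c = (dist t t' + r - r') / 2 ∧
      dist t' c = (dist t t' + r' - r) / 2 ∧
      (∀ c' : T, dist t c' = (dist t t' + r - r') / 2 →
        dist t' c' = (dist t t' + r' - r) / 2 → c' = c) ∧
      Metric.closedBall t r ∩ Metric.closedBall t' r' =
        Metric.closedBall c ((r + r' - dist t t') / 2) :=
  real_tree_ball_intersection_general hgeo hhyp t t' r r' h1 h2
end
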